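/- arXiv:2204.10490 — 6 statements merged into one kernel-verified Lean document; each statement's English description precedes it below -/
import Mathlib

section
/- If three sets F1, F2, F3 in the plane have a common line transversal (a line intersecting all three), then they form a tight triple, i.e., conv(F1 ∪ F2) ∩ conv(F2 ∪ F3) ∩ conv(F3 ∪ F1) ≠ ∅. -/
/-!
Three points of a line are collinear, so one of them, say `x₂ ∈ F₂`, lies on the segment
between the other two, `x₁ ∈ F₁` and `x₃ ∈ F₃`. Then `x₂` is a common point of the three
hulls: it belongs to `F₁ ∪ F₂` and `F₂ ∪ F₃`, and the segment `[x₁, x₃]` lies in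
`conv(F₃ ∪ F₁)`.
-/

open Set

noncomputable section

abbrev Plane := EuclideanSpace ℝ (Fin 2)

/-- A line in the plane: a point plus a nonzero direction. -/
def IsLine (L : Set Plane) : Prop :=
  ∃ p v : Plane, v ≠ 0 ∧ L = {x | ∃ t : ℝ, x = p + t • v}

/-- A `C(k)` family: `k` distinct sets such that the convex hulls of consecutive
unions are disjoint whenever the index pairs (mod `k`) are disjoint. -/
def IsCk (k : ℕ) [NeZero k] (F : Fin k → Set Plane) : Prop :=
  Function.Injective F ∧
  ∀ i j : Fin k, Disjoint ({i, i + 1} : Finset (Fin k)) ({j, j + 1} : Finset (Fin k)) →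
    convexHull ℝ (F i ∪ F (i + 1)) ∩ convexHull ℝ (F j ∪ F (j + 1)) = ∅

section TightTriple

variable {𝕜 E : Type*}

section Semiring

variable [Semiring 𝕜] [PartialOrder 𝕜] [AddCommMonoid E] [Module 𝕜 E]

variable (𝕜) in
def IsTightTriple (A B C : Set E) : Prop :=
  (convexHull 𝕜 (A ∪ B) ∩ convexHull 𝕜 (B ∪ C) ∩ convexHull 𝕜 (C ∪ A)).Nonempty

theorem IsTightTriple.rotate {A B C : Set E} (h : IsTightTriple 𝕜 A B C) :
    IsTightTriple 𝕜 B C A := by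
  obtain ⟨p, ⟨hAB, hBC⟩, hCA⟩ := h
  exact ⟨p, ⟨hBC, hCA⟩, hAB⟩

end Semiring

theorem isTightTriple_of_wbtw [Ring 𝕜] [PartialOrder 𝕜] [IsOrderedRing 𝕜] [AddCommGroup E]
    [Module 𝕜 E] {A B C : Set E} {x y z : E} (hx : x ∈ A) (hy : y ∈ B)
    (hz : z ∈ C) (h : Wbtw 𝕜 x y z) : IsTightTriple 𝕜 A B C := by
  refine ⟨y, ⟨subset_convexHull 𝕜 (A ∪ B) (Or.inr hy), subset_convexHull 𝕜 (B ∪ C) (Or.inl hy)⟩,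
    ?_⟩
  exact (convex_convexHull 𝕜 _).segment_subset (subset_convexHull 𝕜 (C ∪ A) (Or.inr hx))
    (subset_convexHull 𝕜 (C ∪ A) (Or.inl hz)) h.mem_segment

theorem isTightTriple_of_collinear [Field 𝕜] [LinearOrder 𝕜] [IsStrictOrderedRing 𝕜]
    [AddCommGroup E] [Module 𝕜 E] {A B C : Set E} {x y z : E} (hx : x ∈ A) (hy : y ∈ B)
    (hz : z ∈ C) (h : Collinear 𝕜 {x, y, z}) : IsTightTriple 𝕜 A B C := by
  rcases h.wbtw_or_wbtw_or_wbtw with hxyz | hyzx | hzxy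
  · exact isTightTriple_of_wbtw hx hy hz hxyz
  · exact (isTightTriple_of_wbtw hy hz hx hyzx).rotate.rotate
  · exact (isTightTriple_of_wbtw hz hx hy hzxy).rotate

end TightTriple

theorem IsLine.collinear {L : Set Plane} (hL : IsLine L) : Collinear ℝ L := by
  obtain ⟨p, v, -, rfl⟩ := hL
  refine (collinear_iff_exists_forall_eq_smul_vadd _).2 ⟨p, v, ?_⟩
  rintro _ ⟨t, rfl⟩
  exact ⟨t, add_comm _ _⟩

theorem line_transversal_tight_triple_general (F1 F2 F3 : Set Plane)
    (L : Set Plane) (hL : IsLine L)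
    (hL1 : (F1 ∩ L).Nonempty) (hL2 : (F2 ∩ L).Nonempty) (hL3 : (F3 ∩ L).Nonempty) :
    (convexHull ℝ (F1 ∪ F2) ∩ convexHull ℝ (F2 ∪ F3) ∩ convexHull ℝ (F3 ∪ F1)).Nonempty := by
  obtain ⟨x1, hx1, hx1L⟩ := hL1
  obtain ⟨x2, hx2, hx2L⟩ := hL2
  obtain ⟨x3, hx3, hx3L⟩ := hL3
  have hcol : Collinear ℝ {x1, x2, x3} :=
    hL.collinear.subset (insert_subset hx1L (insert_subset hx2L (singleton_subset_iff.2 hx3L)))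
  exact isTightTriple_of_collinear hx1 hx2 hx3 hcol

/-- three sets with a common line transversal form a tight triple. -/
theorem line_transversal_tight_triple (F1 F2 F3 : Set Plane)
    (h1 : F1.Nonempty) (h2 : F2.Nonempty) (h3 : F3.Nonempty)
    (L : Set Plane) (hL : IsLine L)
    (hL1 : (F1 ∩ L).Nonempty) (hL2 : (F2 ∩ L).Nonempty) (hL3 : (F3 ∩ L).Nonempty) :
    (convexHull ℝ (F1 ∪ F2) ∩ convexHull ℝ (F2 ∪ F3) ∩ convexHull ℝ (F3 ∪ F1)).Nonempty :=
  line_transversal_tight_triple_general F1 F2 F3 L hL hL1 hL2 hL3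
end
end

section
/- For k ≥ 4, no C(k) family of nonempty sets in the plane has a line transversal. -/
open Set

noncomputable section

open Fin.NatCast in
lemma fin_numeral_ne (k : ℕ) [NeZero k] (hk : 4 ≤ k) (m n : ℕ) (hm : m < 4) (hn : n < 4)
    (hmn : m ≠ n) : ((m : ℕ) : Fin k) ≠ ((n : ℕ) : Fin k) := by
  intro h
  have hm' : (((m : ℕ) : Fin k) : ℕ) = m := Fin.val_cast_of_lt (by omega)
  have hn' : (((n : ℕ) : Fin k) : ℕ) = n := Fin.val_cast_of_lt (by omega)
  rw [h, hn'] at hm'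
  exact hmn hm'.symm

/-- for k ≥ 4, no C(k) family of nonempty sets has a line transversal. -/
theorem ck_no_line_transversal (k : ℕ) [NeZero k] (hk : 4 ≤ k)
    (F : Fin k → Set Plane) (hne : ∀ i, (F i).Nonempty) (hF : IsCk k F) :
    ¬ ∃ L : Set Plane, IsLine L ∧ ∀ i, (F i ∩ L).Nonempty := by
  rintro ⟨L, ⟨p, v, hv, rfl⟩, hL⟩
  choose q hq using hL
  choose t ht using fun i => (hq i).2
  -- basic distinctness of small elements of Fin k
  have h10 : (1 : Fin k) ≠ 0 := by
    have := fin_numeral_ne k hk 1 0 (by omega) (by omega) (by omega)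
    simpa using this
  have h20 : (2 : Fin k) ≠ 0 := by
    have := fin_numeral_ne k hk 2 0 (by omega) (by omega) (by omega)
    simpa using this
  have h30 : (3 : Fin k) ≠ 0 := by
    have := fin_numeral_ne k hk 3 0 (by omega) (by omega) (by omega)
    simpa using this
  -- the key geometric fact: points on the line between t i and t (i+1) lie
  -- in the convex hull of F i ∪ F (i+1)
  have key : ∀ (i : Fin k) (s : ℝ), s ∈ Set.uIcc (t i) (t (i + 1)) →
      p + s • v ∈ convexHull ℝ (F i ∪ F (i + 1)) := by
    intro i s hs
    rw [← segment_eq_uIcc] at hs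
    obtain ⟨a, b, ha, hb, hab, rfl⟩ := hs
    have h1 : q i ∈ convexHull ℝ (F i ∪ F (i + 1)) :=
      subset_convexHull ℝ _ (Or.inl (hq i).1)
    have h2 : q (i + 1) ∈ convexHull ℝ (F i ∪ F (i + 1)) :=
      subset_convexHull ℝ _ (Or.inr (hq (i + 1)).1)
    have hmem := (convex_convexHull ℝ (F i ∪ F (i + 1))) h1 h2 ha hb hab
    have heq : a • q i + b • q (i + 1) = p + (a * t i + b * t (i + 1)) • v := by
      rw [ht i, ht (i + 1)]
      have : a • p + b • p = p := by rw [← add_smul, hab, one_smul]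
      rw [smul_add, smul_add, add_smul, mul_smul, mul_smul]
      rw [show a • p + a • (t i • v) + (b • p + b • (t (i+1) • v))
            = (a • p + b • p) + (a • (t i • v) + b • (t (i+1) • v)) by abel, this]
    rwa [heq] at hmem
  -- contradiction builder
  have contra : ∀ i j : Fin k, i ≠ j → i ≠ j + 1 → i + 1 ≠ j → i + 1 ≠ j + 1 →
      ∀ s : ℝ, s ∈ Set.uIcc (t i) (t (i + 1)) → s ∈ Set.uIcc (t j) (t (j + 1)) → False := by
    intro i j e1 e2 e3 e4 s hsi hsj
    have hd : Disjoint ({i, i + 1} : Finset (Fin k)) ({j, j + 1} : Finset (Fin k)) := by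
      rw [Finset.disjoint_left]
      intro a hai haj
      simp only [Finset.mem_insert, Finset.mem_singleton] at hai haj
      rcases hai with rfl | rfl <;> rcases haj with h | h <;> tauto
    have hempty := hF.2 i j hd
    have : p + s • v ∈ convexHull ℝ (F i ∪ F (i + 1)) ∩ convexHull ℝ (F j ∪ F (j + 1)) :=
      ⟨key i s hsi, key j s hsj⟩
    rw [hempty] at this
    exact this
  -- choose the maximum M and the second maximum J
  obtain ⟨M, _, hM⟩ := Finset.univ.exists_max_image t ⟨0, Finset.mem_univ 0⟩
  have hMmax : ∀ a, t a ≤ t M := fun a => hM a (Finset.mem_univ a)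
  have herase : (Finset.univ.erase M).Nonempty := by
    refine ⟨1 + M, Finset.mem_erase.mpr ⟨?_, Finset.mem_univ _⟩⟩
    intro h
    apply h10
    have h' : (1 : Fin k) + M = 0 + M := by rw [zero_add]; exact h
    exact add_right_cancel h' 
  obtain ⟨J, hJmem, hJ⟩ := (Finset.univ.erase M).exists_max_image t herase
  have hJM : J ≠ M := (Finset.mem_erase.mp hJmem).1
  have hJmax : ∀ a, a ≠ M → t a ≤ t J := fun a ha =>
    hJ a (Finset.mem_erase.mpr ⟨ha, Finset.mem_univ a⟩)
  set s := t J with hs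
  -- membership facts
  have hM1 : M - 1 + 1 = M := sub_add_cancel M 1
  have hJ1 : J - 1 + 1 = J := sub_add_cancel J 1
  have hMne : M - 1 ≠ M := by
    intro h
    have : M - 1 = M - 0 := by rw [sub_zero]; exact h
    exact h10 (sub_right_inj.mp this)
  have hMne' : M + 1 ≠ M := by
    intro h
    have : M + 1 = M + 0 := by rw [add_zero]; exact h
    exact h10 (add_left_cancel this)
  have mem1 : s ∈ Set.uIcc (t (M - 1)) (t (M - 1 + 1)) := by
    rw [hM1]
    exact Set.mem_uIcc.mpr (Or.inl ⟨hJmax _ hMne, hMmax J⟩)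
  have mem2 : s ∈ Set.uIcc (t M) (t (M + 1)) := by
    exact Set.mem_uIcc.mpr (Or.inr ⟨hJmax _ hMne', hMmax J⟩)
  have mem3 : s ∈ Set.uIcc (t (J - 1)) (t (J - 1 + 1)) := by
    rw [hJ1]; exact Set.right_mem_uIcc
  have mem4 : s ∈ Set.uIcc (t J) (t (J + 1)) := Set.left_mem_uIcc
  -- case split
  by_cases hc1 : J = M + 1
  · -- use intervals I_J = I_{M+1} and I_{M-1}
    refine contra J (M - 1) ?_ ?_ ?_ ?_ s mem4 (by rw [hM1] at mem1; simpa [hM1] using mem1)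
    · -- M + 1 ≠ M - 1
      subst hc1
      intro h
      apply h20
      have h2 : M + 1 + 1 = M - 1 + 1 := by rw [h]
      rw [hM1] at h2
      have : M + (1 + 1) = M + 0 := by rw [← add_assoc, add_zero]; exact h2
      have := add_left_cancel this
      rwa [show (1:Fin k) + 1 = 2 by open Fin.CommRing in exact one_add_one_eq_two] at this
    · -- M + 1 ≠ (M - 1) + 1 = M
      rw [hM1]; subst hc1; exact hJM
    · -- M + 1 + 1 ≠ M - 1
      subst hc1
      intro h
      apply h30
      have h2 : M + 1 + 1 + 1 = M - 1 + 1 := by rw [h]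
      rw [hM1] at h2
      have : M + (1 + 1 + 1) = M + 0 := by
        rw [← add_assoc, ← add_assoc, add_zero]; exact h2
      have := add_left_cancel this
      rwa [show (1:Fin k) + 1 + 1 = 3 by open Fin.CommRing in (rw [one_add_one_eq_two]; exact two_add_one_eq_three)] at this
    · -- M + 1 + 1 ≠ M
      rw [hM1]; subst hc1
      intro h
      apply h20
      have : M + (1 + 1) = M + 0 := by rw [← add_assoc, add_zero]; exact h
      have := add_left_cancel this
      rwa [show (1:Fin k) + 1 = 2 by open Fin.CommRing in exact one_add_one_eq_two] at this
  · by_cases hc2 : J = M - 1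
    · -- use intervals I_{J-1} = I_{M-2} and I_M
      have hMJ : M = J + 1 := by rw [hc2, hM1]
      refine contra (J - 1) M ?_ ?_ ?_ ?_ s mem3 mem2
      · -- J - 1 ≠ M = J + 1
        rw [hMJ]
        intro h
        apply h20
        have h2 : J - 1 + 1 = J + 1 + 1 := by rw [h]
        rw [hJ1] at h2
        have : J + 0 = J + (1 + 1) := by rw [add_zero, ← add_assoc]; exact h2
        have := add_left_cancel this
        rw [show (1:Fin k) + 1 = 2 by open Fin.CommRing in exact one_add_one_eq_two] at this
        exact this.symm
      · -- J - 1 ≠ M + 1 = J + 2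
        rw [hMJ]
        intro h
        apply h30
        have h2 : J - 1 + 1 = J + 1 + 1 + 1 := by rw [h]
        rw [hJ1] at h2
        have : J + 0 = J + (1 + 1 + 1) := by
          rw [add_zero, ← add_assoc, ← add_assoc]; exact h2
        have := add_left_cancel this
        rw [show (1:Fin k) + 1 + 1 = 3 by open Fin.CommRing in (rw [one_add_one_eq_two]; exact two_add_one_eq_three)] at this
        exact this.symm
      · -- J - 1 + 1 = J ≠ M
        rw [hJ1]; exact hJM
      · -- J ≠ M + 1
        rw [hJ1]; exact hc1
    · -- generic case: use intervals I_{J-1} and I_{M-1}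
      refine contra (J - 1) (M - 1) ?_ ?_ ?_ ?_ s mem3 mem1
      · -- J - 1 ≠ M - 1
        intro h; exact hJM (sub_left_inj.mp h)
      · -- J - 1 ≠ M - 1 + 1 = M
        rw [hM1]
        intro h
        exact hc1 (sub_eq_iff_eq_add.mp h)
      · -- J ≠ M - 1
        rw [hJ1]; exact hc2
      · -- J ≠ M
        rw [hJ1, hM1]; exact hJM
end
end

section
/- For the family F of 3(k−1) chords of the unit circle defined from 3(k−1) equally spaced points (as in the lower-bound construction), each chord [p,q] ∈ F subtends an arc containing at least 3 of the 3k marked points, and any point of the unit circle lies on the subtended arc of at most 3 chords of F. -/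
open Set

noncomputable section

/-- The point of the unit circle at clockwise parameter `t` (one full turn as `t` goes
through an interval of length 1). -/
def circpt (t : ℝ) : Plane :=
  (EuclideanSpace.equiv (Fin 2) ℝ).symm ![Real.cos (2 * Real.pi * t), Real.sin (-(2 * Real.pi * t))]

/-- The spacing `δ` between the `3(k-1)` equally spaced points on the unit circle. -/
def dlt (k : ℕ) : ℝ := ((3 : ℝ) * ((k : ℝ) - 1))⁻¹

/-- Parameters `(s, t)` (with `s` clockwise before `t`) of the chords of the families
`F₁, F₂, F₃` of the lower-bound construction: `c` indexes the family, `j` the chord.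
In parameter units, `pᵢ` sits at `(i-1)·δ`, and `pᵢᵉ = pᵢ ∓ ε`. -/
def chordPair (k : ℕ) (ε : ℝ) (c : Fin 3) (j : ℕ) : ℝ × ℝ :=
  let δ := dlt k
  if c = 0 then
    (if j = 0 then (ε, 2 * δ - ε) else ((3 * j : ℝ) * δ, (3 * j + 2 : ℝ) * δ))
  else if c = 1 then
    (if j = 0 then (δ + ε, 3 * δ)
     else if j = k - 2 then ((3 * j + 1 : ℝ) * δ, 1 - ε)
     else ((3 * j + 1 : ℝ) * δ, (3 * j + 3 : ℝ) * δ))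
  else
    (if j = 0 then (2 * δ + ε, 4 * δ)
     else if j = k - 2 then ((3 * j + 2 : ℝ) * δ, 1 + δ - ε)
     else ((3 * j + 2 : ℝ) * δ, (3 * j + 4 : ℝ) * δ))

/-- The parameters of the `3k` marked points `p₁ᵉ, p₁ʳ, p₂ᵉ, p₂ʳ, p₃ᵉ, p₃ʳ, p₄, …, p_{3(k-1)}`. -/
def markedParams (k : ℕ) (ε : ℝ) : Finset ℝ :=
  let δ := dlt k
  {-ε, ε, δ - ε, δ + ε, 2 * δ - ε, 2 * δ + ε} ∪
    (Finset.Icc 3 (3 * (k - 1) - 1)).image (fun j : ℕ => (j : ℝ) * δ)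

/-- The closed clockwise arc of the unit circle from parameter `s` to parameter `t`. -/
def arcOf (s t : ℝ) : Set Plane := circpt '' Set.Icc s t

lemma circpt_eq_iff {s t : ℝ} : circpt s = circpt t ↔ ∃ n : ℤ, t - s = n := by
  constructor
  · intro h
    have h0 : Real.cos (2*Real.pi*s) = Real.cos (2*Real.pi*t) := congrArg (fun p : Plane => p 0) h
    have h1 : Real.sin (-(2*Real.pi*s)) = Real.sin (-(2*Real.pi*t)) := congrArg (fun p : Plane => p 1) h
    rw [Real.sin_neg, Real.sin_neg, neg_inj] at h1
    have key : Real.cos (2*Real.pi*t - 2*Real.pi*s) = 1 := by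
      rw [Real.cos_sub, ← h0, ← h1]
      nlinarith [Real.cos_sq_add_sin_sq (2*Real.pi*s)]
    rw [Real.cos_eq_one_iff] at key
    obtain ⟨n, hn⟩ := key
    refine ⟨n, ?_⟩
    have hpi := Real.pi_pos
    have h2 : (2*Real.pi) * (t - s) = (2*Real.pi) * n := by linarith
    exact mul_left_cancel₀ (by positivity) h2
  · rintro ⟨n, hn⟩
    have ht : t = s + n := by linarith
    subst ht
    unfold circpt
    congr 1
    have hc : Real.cos (2*Real.pi*(s + n)) = Real.cos (2*Real.pi*s) := by
      rw [show 2*Real.pi*(s + (n:ℝ)) = 2*Real.pi*s + n*(2*Real.pi) by ring]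
      exact Real.cos_add_int_mul_two_pi _ _
    have hs : Real.sin (2*Real.pi*(s + n)) = Real.sin (2*Real.pi*s) := by
      rw [show 2*Real.pi*(s + (n:ℝ)) = 2*Real.pi*s + n*(2*Real.pi) by ring]
      exact Real.sin_add_int_mul_two_pi _ _
    rw [Real.sin_neg, Real.sin_neg, hc, hs]

lemma circpt_ne {s t : ℝ} (h0 : 0 < t - s) (h1 : t - s < 1) : circpt s ≠ circpt t := by
  intro h
  obtain ⟨n, hn⟩ := circpt_eq_iff.mp h
  have ha : (0:ℝ) < (n:ℝ) := hn ▸ h0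
  have hb : ((n:ℝ)) < 1 := hn ▸ h1
  have h2 : (0:ℤ) < n := by exact_mod_cast ha
  have h3 : n < 1 := by exact_mod_cast hb
  omega

lemma circpt_add_one (t : ℝ) : circpt (t + 1) = circpt t := by
  refine circpt_eq_iff.mpr ⟨-1, by push_cast; ring⟩

lemma mem_marked_idx (k : ℕ) (ε : ℝ) (j : ℕ) (h3 : 3 ≤ j) (hj : j ≤ 3*(k-1)-1) :
    (j:ℝ) * dlt k ∈ markedParams k ε := by
  unfold markedParams
  simp only [Finset.mem_union, Finset.mem_image, Finset.mem_Icc]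
  exact Or.inr ⟨j, ⟨h3, hj⟩, rfl⟩

lemma basics (k : ℕ) (hk : 5 ≤ k) :
    0 < dlt k ∧ 3*((k:ℝ)-1) * dlt k = 1 ∧ dlt k ≤ 1/12 := by
  have hK : (5:ℝ) ≤ (k:ℝ) := by exact_mod_cast hk
  have hpos : (0:ℝ) < 3*((k:ℝ)-1) := by linarith
  have hδ : 0 < dlt k := by unfold dlt; exact inv_pos.mpr hpos
  have h1 : 3*((k:ℝ)-1) * dlt k = 1 := by
    unfold dlt; exact mul_inv_cancel₀ hpos.ne'
  refine ⟨hδ, h1, ?_⟩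
  have h12 : 12 * dlt k ≤ 3*((k:ℝ)-1) * dlt k := by nlinarith
  linarith

lemma aux_card (k : ℕ) (ε : ℝ) (s e t1 t2 t3 u1 u2 u3 : ℝ)
    (hu1 : u1 ∈ markedParams k ε) (hu2 : u2 ∈ markedParams k ε) (hu3 : u3 ∈ markedParams k ε)
    (he1 : circpt t1 = circpt u1) (he2 : circpt t2 = circpt u2) (he3 : circpt t3 = circpt u3)
    (hm1 : t1 ∈ Set.Icc s e) (hm2 : t2 ∈ Set.Icc s e) (hm3 : t3 ∈ Set.Icc s e)
    (h12 : 0 < t2 - t1) (h23 : 0 < t3 - t2) (h13 : t3 - t1 < 1) :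
    3 ≤ Set.ncard ((circpt '' (markedParams k ε : Set ℝ)) ∩ arcOf s e) := by
  have hfin : ((circpt '' (markedParams k ε : Set ℝ)) ∩ arcOf s e).Finite :=
    Set.Finite.inter_of_left (Set.Finite.image _ (markedParams k ε).finite_toSet) _
  have hmem : ∀ t u, u ∈ markedParams k ε → circpt t = circpt u → t ∈ Set.Icc s e →
      circpt t ∈ (circpt '' (markedParams k ε : Set ℝ)) ∩ arcOf s e := by
    intro t u hu he hm
    exact ⟨⟨u, hu, he.symm⟩, ⟨t, hm, rfl⟩⟩
  have hsub : ({circpt t1, circpt t2, circpt t3} : Set Plane) ⊆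
      (circpt '' (markedParams k ε : Set ℝ)) ∩ arcOf s e := by
    intro x hx
    rcases hx with rfl | rfl | rfl
    · exact hmem t1 u1 hu1 he1 hm1
    · exact hmem t2 u2 hu2 he2 hm2
    · exact hmem t3 u3 hu3 he3 hm3
  have h3 : ({circpt t1, circpt t2, circpt t3} : Set Plane).ncard = 3 := by
    rw [Set.ncard_eq_three]
    exact ⟨_, _, _, circpt_ne h12 (by linarith), circpt_ne (by linarith) h13,
      circpt_ne h23 (by linarith), rfl⟩
  calc (3:ℕ) = _ := h3.symm
    _ ≤ _ := Set.ncard_le_ncard hsub hfin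

lemma mem_marked_exp (k : ℕ) (ε : ℝ) :
    (-ε ∈ markedParams k ε) ∧ (ε ∈ markedParams k ε) ∧ (dlt k - ε ∈ markedParams k ε) ∧
    (dlt k + ε ∈ markedParams k ε) ∧ (2*dlt k - ε ∈ markedParams k ε) ∧
    (2*dlt k + ε ∈ markedParams k ε) := by
  unfold markedParams
  simp only [Finset.mem_union, Finset.mem_insert, Finset.mem_singleton]
  tauto

lemma chordPair_fst_snd (k : ℕ) (hk : 5 ≤ k) (ε : ℝ) (c : Fin 3) (j : ℕ) :
    (c = 0 → j = 0 → (chordPair k ε c j).1 = ε ∧ (chordPair k ε c j).2 = 2 * dlt k - ε) ∧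
    (c = 0 → j ≠ 0 → (chordPair k ε c j).1 = (3 * j : ℝ) * dlt k ∧
      (chordPair k ε c j).2 = (3 * j + 2 : ℝ) * dlt k) ∧
    (c = 1 → j = 0 → (chordPair k ε c j).1 = dlt k + ε ∧ (chordPair k ε c j).2 = 3 * dlt k) ∧
    (c = 1 → j = k - 2 → (chordPair k ε c j).1 = (3 * j + 1 : ℝ) * dlt k ∧
      (chordPair k ε c j).2 = 1 - ε) ∧
    (c = 1 → j ≠ 0 → j ≠ k - 2 → (chordPair k ε c j).1 = (3 * j + 1 : ℝ) * dlt k ∧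
      (chordPair k ε c j).2 = (3 * j + 3 : ℝ) * dlt k) ∧
    (c = 2 → j = 0 → (chordPair k ε c j).1 = 2 * dlt k + ε ∧ (chordPair k ε c j).2 = 4 * dlt k) ∧
    (c = 2 → j = k - 2 → (chordPair k ε c j).1 = (3 * j + 2 : ℝ) * dlt k ∧
      (chordPair k ε c j).2 = 1 + dlt k - ε) ∧
    (c = 2 → j ≠ 0 → j ≠ k - 2 → (chordPair k ε c j).1 = (3 * j + 2 : ℝ) * dlt k ∧
      (chordPair k ε c j).2 = (3 * j + 4 : ℝ) * dlt k) := by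
  have hk20 : k - 2 ≠ 0 := by omega
  refine ⟨?_, ?_, ?_, ?_, ?_, ?_, ?_, ?_⟩
  · rintro rfl rfl; constructor <;> simp [chordPair]
  · rintro rfl h1; constructor <;> simp [chordPair, h1]
  · rintro rfl rfl; constructor <;> simp [chordPair]
  · rintro rfl rfl; constructor <;> simp [chordPair, hk20]
  · rintro rfl h1 h2; constructor <;> simp [chordPair, h1, h2]
  · rintro rfl rfl; constructor <;> simp [chordPair, Fin.ext_iff]
  · rintro rfl rfl; constructor <;> simp [chordPair, Fin.ext_iff, hk20]
  · rintro rfl h1 h2; constructor <;> simp [chordPair, Fin.ext_iff, h1, h2]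

lemma fin3_eq_two (c : Fin 3) (hc0 : c ≠ 0) (hc1 : c ≠ 1) : c = 2 := by
  have h0 : (c:ℕ) ≠ 0 := fun h => hc0 (Fin.ext h)
  have h1 : (c:ℕ) ≠ 1 := fun h => hc1 (Fin.ext h)
  have h3 := c.isLt
  apply Fin.ext
  show (c:ℕ) = 2
  omega

lemma chord_bounds (k : ℕ) (hk : 5 ≤ k) (ε : ℝ) (hε : 0 < ε) (hε' : ε < dlt k / 2)
    (c : Fin 3) (j : ℕ) (hj : j ≤ k - 2) :
    ((3*(j:ℝ) + ((c:ℕ):ℝ)) * dlt k ≤ (chordPair k ε c j).1) ∧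
    ((chordPair k ε c j).2 ≤ (3*(j:ℝ) + ((c:ℕ):ℝ) + 2) * dlt k) := by
  obtain ⟨hδ, h1, h12⟩ := basics k hk
  have hK : (5:ℝ) ≤ (k:ℝ) := by exact_mod_cast hk
  have h2k : (2:ℕ) ≤ k := by omega
  have hkr : ((k-2:ℕ):ℝ) = (k:ℝ) - 2 := by push_cast [Nat.cast_sub h2k]; ring
  have hjK : ((j:ℕ):ℝ) ≤ (k:ℝ) - 2 := by
    have : ((j:ℕ):ℝ) ≤ ((k-2:ℕ):ℝ) := by exact_mod_cast hj
    rw [hkr] at this; linarith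
  have hj0' : (0:ℝ) ≤ (j:ℝ) := Nat.cast_nonneg j
  have hjd : (j:ℝ)*dlt k ≤ ((k:ℝ)-2)*dlt k := mul_le_mul_of_nonneg_right hjK hδ.le
  have hj0d : (0:ℝ) ≤ (j:ℝ)*dlt k := by positivity
  obtain ⟨e1, e2, e3, e4, e5, e6, e7, e8⟩ := chordPair_fst_snd k hk ε c j
  by_cases hc0 : c = 0
  · subst hc0
    by_cases hj0 : j = 0
    · obtain ⟨f1, f2⟩ := e1 rfl hj0
      rw [f1, f2]; subst hj0
      constructor <;> (norm_num; try linarith)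
    · obtain ⟨f1, f2⟩ := e2 rfl hj0
      rw [f1, f2]
      constructor <;> (norm_num; try linarith)
  · by_cases hc1 : c = 1
    · subst hc1
      by_cases hj0 : j = 0
      · obtain ⟨f1, f2⟩ := e3 rfl hj0
        rw [f1, f2]; subst hj0
        constructor <;> (norm_num; try linarith)
      · by_cases hjk : j = k - 2
        · obtain ⟨f1, f2⟩ := e4 rfl hjk
          have hjrd : (j:ℝ)*dlt k = ((k:ℝ)-2)*dlt k := by rw [hjk, hkr]
          rw [f1, f2]
          constructor <;> (norm_num; try linarith)
        · obtain ⟨f1, f2⟩ := e5 rfl hj0 hjk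
          rw [f1, f2]
          constructor <;> (norm_num; try linarith)
    · have hc2 : c = 2 := fin3_eq_two c hc0 hc1
      subst hc2
      by_cases hj0 : j = 0
      · obtain ⟨f1, f2⟩ := e6 rfl hj0
        rw [f1, f2]; subst hj0
        constructor <;> (norm_num; try linarith)
      · by_cases hjk : j = k - 2
        · obtain ⟨f1, f2⟩ := e7 rfl hjk
          have hjrd : (j:ℝ)*dlt k = ((k:ℝ)-2)*dlt k := by rw [hjk, hkr]
          rw [f1, f2]
          constructor <;> (norm_num; try linarith)
        · obtain ⟨f1, f2⟩ := e8 rfl hj0 hjk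
          rw [f1, f2]
          constructor <;> (norm_num; try linarith)

lemma no_overlap (k : ℕ) (hk : 5 ≤ k) (ε : ℝ) (hε : 0 < ε) (hε' : ε < dlt k / 2)
    (c : Fin 3) (j1 j2 : ℕ) (hlt : j1 < j2) (hj2 : j2 ≤ k - 2) (y : Plane)
    (h1 : y ∈ arcOf (chordPair k ε c j1).1 (chordPair k ε c j1).2)
    (h2 : y ∈ arcOf (chordPair k ε c j2).1 (chordPair k ε c j2).2) : False := by
  obtain ⟨hδ, hone, h12⟩ := basics k hk
  obtain ⟨t1, ht1, hy1⟩ := h1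
  obtain ⟨t2, ht2, hy2⟩ := h2
  obtain ⟨b1l, b1u⟩ := chord_bounds k hk ε hε hε' c j1 (by omega)
  obtain ⟨b2l, b2u⟩ := chord_bounds k hk ε hε hε' c j2 hj2
  have hcirc : circpt t1 = circpt t2 := by rw [hy1, hy2]
  obtain ⟨n, hn⟩ := circpt_eq_iff.mp hcirc
  have key1 : ((j1:ℝ)+1)*dlt k ≤ (j2:ℝ)*dlt k := by
    have : ((j1:ℝ)+1) ≤ (j2:ℝ) := by exact_mod_cast hlt
    exact mul_le_mul_of_nonneg_right this hδ.le
  have key2 : (j2:ℝ)*dlt k ≤ ((k:ℝ)-2)*dlt k := by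
    have h2' : (j2:ℝ) ≤ ((k:ℝ)-2) := by
      have h2k : (2:ℕ) ≤ k := by omega
      have : (j2:ℝ) ≤ ((k-2:ℕ):ℝ) := by exact_mod_cast hj2
      rw [Nat.cast_sub h2k] at this
      push_cast at this
      linarith
    exact mul_le_mul_of_nonneg_right h2' hδ.le
  have key3 : (0:ℝ) ≤ (j1:ℝ)*dlt k := by positivity
  have hlow : (0:ℝ) < t2 - t1 := by
    have p1 := ht1.2; have p2 := ht2.1
    nlinarith
  have hhigh : t2 - t1 < 1 := by
    have p1 := ht1.1; have p2 := ht2.2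
    nlinarith
  rw [hn] at hlow hhigh
  have h2' : (0:ℤ) < n := by exact_mod_cast hlow
  have h3' : n < 1 := by exact_mod_cast hhigh
  omega

set_option maxHeartbeats 1000000

/-- in the lower-bound construction, the arc subtended by each of the
`3(k−1)` chords contains at least 3 of the `3k` marked points, and every point of the
unit circle lies on the subtended arc of at most 3 chords. -/
theorem construction_arc_counts (k : ℕ) (hk : 5 ≤ k) (ε : ℝ)
    (hε : 0 < ε) (hε' : ε < dlt k / 2) :
    (∀ c : Fin 3, ∀ j : Fin (k - 1),
      3 ≤ Set.ncard
        ((circpt '' (markedParams k ε : Set ℝ)) ∩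
          arcOf (chordPair k ε c (j : ℕ)).1 (chordPair k ε c (j : ℕ)).2)) ∧
    (∀ y : Plane, ‖y‖ = 1 →
      Set.ncard {p : Fin 3 × Fin (k - 1) |
        y ∈ arcOf (chordPair k ε p.1 (p.2 : ℕ)).1 (chordPair k ε p.1 (p.2 : ℕ)).2} ≤ 3) := by
  obtain ⟨hδ, hone, h12⟩ := basics k hk
  have hK : (5:ℝ) ≤ (k:ℝ) := by exact_mod_cast hk
  have h2k : (2:ℕ) ≤ k := by omega
  have hkr : ((k-2:ℕ):ℝ) = (k:ℝ) - 2 := by push_cast [Nat.cast_sub h2k]; ring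
  obtain ⟨hm1, hm2, hm3, hm4, hm5, hm6⟩ := mem_marked_exp k ε
  constructor
  · intro c j
    have hjle : (j:ℕ) ≤ k - 2 := by have := j.isLt; omega
    have hjK : ((j:ℕ):ℝ) ≤ (k:ℝ) - 2 := by
      have : ((j:ℕ):ℝ) ≤ ((k-2:ℕ):ℝ) := by exact_mod_cast hjle
      rw [hkr] at this; linarith
    have hjd : ((j:ℕ):ℝ)*dlt k ≤ ((k:ℝ)-2)*dlt k :=
      mul_le_mul_of_nonneg_right hjK hδ.le
    have hjd0 : (0:ℝ) ≤ ((j:ℕ):ℝ)*dlt k := by positivity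
    obtain ⟨e1, e2, e3, e4, e5, e6, e7, e8⟩ := chordPair_fst_snd k hk ε c (j:ℕ)
    by_cases hc0 : c = 0
    · subst hc0
      by_cases hj0 : (j:ℕ) = 0
      · obtain ⟨f1, f2⟩ := e1 rfl hj0
        rw [f1, f2]
        exact aux_card k ε _ _ ε (dlt k - ε) (dlt k + ε) ε (dlt k - ε) (dlt k + ε)
          hm2 hm3 hm4 rfl rfl rfl
          ⟨le_refl _, by linarith⟩ ⟨by linarith, by linarith⟩ ⟨by linarith, by linarith⟩
          (by linarith) (by linarith) (by linarith)
      · obtain ⟨f1, f2⟩ := e2 rfl hj0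
        rw [f1, f2]
        have hj1 : (1:ℝ) ≤ ((j:ℕ):ℝ) := by exact_mod_cast Nat.one_le_iff_ne_zero.mpr hj0
        refine aux_card k ε _ _ (((3*(j:ℕ):ℕ):ℝ)*dlt k) (((3*(j:ℕ)+1:ℕ):ℝ)*dlt k)
          (((3*(j:ℕ)+2:ℕ):ℝ)*dlt k) _ _ _
          (mem_marked_idx k ε _ (by omega) (by omega))
          (mem_marked_idx k ε _ (by omega) (by omega))
          (mem_marked_idx k ε _ (by omega) (by omega))
          rfl rfl rfl ?_ ?_ ?_ ?_ ?_ ?_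
        · constructor <;> (push_cast; linarith)
        · constructor <;> (push_cast; linarith)
        · constructor <;> (push_cast; linarith)
        · push_cast; linarith
        · push_cast; linarith
        · push_cast; linarith
    · by_cases hc1 : c = 1
      · subst hc1
        by_cases hj0 : (j:ℕ) = 0
        · obtain ⟨f1, f2⟩ := e3 rfl hj0
          rw [f1, f2]
          exact aux_card k ε _ _ (dlt k + ε) (2*dlt k - ε) (2*dlt k + ε)
            (dlt k + ε) (2*dlt k - ε) (2*dlt k + ε)
            hm4 hm5 hm6 rfl rfl rfl
            ⟨le_refl _, by linarith⟩ ⟨by linarith, by linarith⟩ ⟨by linarith, by linarith⟩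
            (by linarith) (by linarith) (by linarith)
        · by_cases hjk : (j:ℕ) = k - 2
          · obtain ⟨f1, f2⟩ := e4 rfl hjk
            rw [f1, f2]
            have hjr : ((j:ℕ):ℝ) = (k:ℝ) - 2 := by rw [hjk, hkr]
            have hjrd : ((j:ℕ):ℝ)*dlt k = ((k:ℝ)-2)*dlt k := by rw [hjr]
            have c5 : ((3*k-5:ℕ):ℝ) = 3*(k:ℝ)-5 := by
              push_cast [Nat.cast_sub (show (5:ℕ) ≤ 3*k by omega)]; ring
            have c4 : ((3*k-4:ℕ):ℝ) = 3*(k:ℝ)-4 := by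
              push_cast [Nat.cast_sub (show (4:ℕ) ≤ 3*k by omega)]; ring
            refine aux_card k ε _ _ (((3*k-5:ℕ):ℝ)*dlt k) (((3*k-4:ℕ):ℝ)*dlt k)
              (1 - ε) _ _ (-ε)
              (mem_marked_idx k ε _ (by omega) (by omega))
              (mem_marked_idx k ε _ (by omega) (by omega))
              hm1 rfl rfl ?_ ?_ ?_ ?_ ?_ ?_ ?_
            · rw [show (1:ℝ) - ε = -ε + 1 by ring]; exact circpt_add_one _
            · rw [c5]; constructor <;> linarith
            · rw [c4]; constructor <;> linarith
            · constructor <;> linarith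
            · rw [c5, c4]; linarith
            · rw [c4]; linarith
            · rw [c5]; linarith
          · obtain ⟨f1, f2⟩ := e5 rfl hj0 hjk
            rw [f1, f2]
            have hj1 : (1:ℝ) ≤ ((j:ℕ):ℝ) := by exact_mod_cast Nat.one_le_iff_ne_zero.mpr hj0
            have hjK3 : ((j:ℕ):ℝ) ≤ (k:ℝ) - 3 := by
              have h3 : (j:ℕ) ≤ k - 3 := by omega
              have : ((j:ℕ):ℝ) ≤ ((k-3:ℕ):ℝ) := by exact_mod_cast h3
              rw [Nat.cast_sub (show (3:ℕ) ≤ k by omega)] at this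
              push_cast at this; linarith
            have hjd3 : ((j:ℕ):ℝ)*dlt k ≤ ((k:ℝ)-3)*dlt k :=
              mul_le_mul_of_nonneg_right hjK3 hδ.le
            refine aux_card k ε _ _ (((3*(j:ℕ)+1:ℕ):ℝ)*dlt k) (((3*(j:ℕ)+2:ℕ):ℝ)*dlt k)
              (((3*(j:ℕ)+3:ℕ):ℝ)*dlt k) _ _ _
              (mem_marked_idx k ε _ (by omega) (by omega))
              (mem_marked_idx k ε _ (by omega) (by omega))
              (mem_marked_idx k ε _ (by omega) (by omega))
              rfl rfl rfl ?_ ?_ ?_ ?_ ?_ ?_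
            · constructor <;> (push_cast; linarith)
            · constructor <;> (push_cast; linarith)
            · constructor <;> (push_cast; linarith)
            · push_cast; linarith
            · push_cast; linarith
            · push_cast; linarith
      · have hc2 : c = 2 := fin3_eq_two c hc0 hc1
        subst hc2
        by_cases hj0 : (j:ℕ) = 0
        · obtain ⟨f1, f2⟩ := e6 rfl hj0
          rw [f1, f2]
          have c3 : ((3:ℕ):ℝ) = (3:ℝ) := by norm_num
          have c4 : ((4:ℕ):ℝ) = (4:ℝ) := by norm_num
          refine aux_card k ε _ _ (2*dlt k + ε) (((3:ℕ):ℝ)*dlt k) (((4:ℕ):ℝ)*dlt k)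
            (2*dlt k + ε) _ _ hm6
            (mem_marked_idx k ε 3 (by omega) (by omega))
            (mem_marked_idx k ε 4 (by omega) (by omega))
            rfl rfl rfl ?_ ?_ ?_ ?_ ?_ ?_
          · exact ⟨le_refl _, by linarith⟩
          · rw [c3]; constructor <;> linarith
          · rw [c4]; constructor <;> linarith
          · rw [c3]; linarith
          · rw [c3, c4]; linarith
          · rw [c4]; linarith
        · by_cases hjk : (j:ℕ) = k - 2
          · obtain ⟨f1, f2⟩ := e7 rfl hjk
            rw [f1, f2]
            have hjr : ((j:ℕ):ℝ) = (k:ℝ) - 2 := by rw [hjk, hkr]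
            have hjrd : ((j:ℕ):ℝ)*dlt k = ((k:ℝ)-2)*dlt k := by rw [hjr]
            have c4 : ((3*k-4:ℕ):ℝ) = 3*(k:ℝ)-4 := by
              push_cast [Nat.cast_sub (show (4:ℕ) ≤ 3*k by omega)]; ring
            refine aux_card k ε _ _ (((3*k-4:ℕ):ℝ)*dlt k) (1 - ε) (1 + ε)
              _ (-ε) ε
              (mem_marked_idx k ε _ (by omega) (by omega))
              hm1 hm2 rfl ?_ ?_ ?_ ?_ ?_ ?_ ?_ ?_
            · rw [show (1:ℝ) - ε = -ε + 1 by ring]; exact circpt_add_one _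
            · rw [show (1:ℝ) + ε = ε + 1 by ring]; exact circpt_add_one _
            · rw [c4]; constructor <;> linarith
            · constructor <;> linarith
            · constructor <;> linarith
            · rw [c4]; linarith
            · linarith
            · rw [c4]; linarith
          · obtain ⟨f1, f2⟩ := e8 rfl hj0 hjk
            rw [f1, f2]
            have hj1 : (1:ℝ) ≤ ((j:ℕ):ℝ) := by exact_mod_cast Nat.one_le_iff_ne_zero.mpr hj0
            have hjK3 : ((j:ℕ):ℝ) ≤ (k:ℝ) - 3 := by
              have h3 : (j:ℕ) ≤ k - 3 := by omega
              have : ((j:ℕ):ℝ) ≤ ((k-3:ℕ):ℝ) := by exact_mod_cast h3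
              rw [Nat.cast_sub (show (3:ℕ) ≤ k by omega)] at this
              push_cast at this; linarith
            have hjd3 : ((j:ℕ):ℝ)*dlt k ≤ ((k:ℝ)-3)*dlt k :=
              mul_le_mul_of_nonneg_right hjK3 hδ.le
            refine aux_card k ε _ _ (((3*(j:ℕ)+2:ℕ):ℝ)*dlt k) (((3*(j:ℕ)+3:ℕ):ℝ)*dlt k)
              (((3*(j:ℕ)+4:ℕ):ℝ)*dlt k) _ _ _
              (mem_marked_idx k ε _ (by omega) (by omega))
              (mem_marked_idx k ε _ (by omega) (by omega))
              (mem_marked_idx k ε _ (by omega) (by omega))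
              rfl rfl rfl ?_ ?_ ?_ ?_ ?_ ?_
            · constructor <;> (push_cast; linarith)
            · constructor <;> (push_cast; linarith)
            · constructor <;> (push_cast; linarith)
            · push_cast; linarith
            · push_cast; linarith
            · push_cast; linarith
  · intro y _
    have hinj : Set.InjOn Prod.fst {p : Fin 3 × Fin (k - 1) |
        y ∈ arcOf (chordPair k ε p.1 (p.2 : ℕ)).1 (chordPair k ε p.1 (p.2 : ℕ)).2} := by
      rintro ⟨c1, j1⟩ hp1 ⟨c2, j2⟩ hp2 hf
      simp only [Set.mem_setOf_eq] at hp1 hp2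
      simp only at hf
      subst hf
      simp only [Prod.mk.injEq, true_and]
      by_contra hne
      have hne' : (j1:ℕ) ≠ (j2:ℕ) := fun h => hne (Fin.ext h)
      have hb1 : (j1:ℕ) ≤ k - 2 := by have := j1.isLt; omega
      have hb2 : (j2:ℕ) ≤ k - 2 := by have := j2.isLt; omega
      rcases hne'.lt_or_gt with h | h
      · exact no_overlap k hk ε hε hε' c1 _ _ h hb2 y hp1 hp2
      · exact no_overlap k hk ε hε hε' c1 _ _ h hb1 y hp2 hp1
    calc Set.ncard {p : Fin 3 × Fin (k - 1) |
        y ∈ arcOf (chordPair k ε p.1 (p.2 : ℕ)).1 (chordPair k ε p.1 (p.2 : ℕ)).2}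
        = (Prod.fst '' {p : Fin 3 × Fin (k - 1) |
          y ∈ arcOf (chordPair k ε p.1 (p.2 : ℕ)).1 (chordPair k ε p.1 (p.2 : ℕ)).2}).ncard :=
          (Set.ncard_image_of_injOn hinj).symm
      _ ≤ (Set.univ : Set (Fin 3)).ncard :=
          Set.ncard_le_ncard (Set.subset_univ _) Set.finite_univ
      _ = 3 := by simp [Set.ncard_univ]
end
end

section
/- Compactness reduction: Let F be a (possibly infinite) family of compact sets in ℝ² and n a natural number. If every finite subfamily of F can be pierced by n lines, then F can be pierced by n lines. -/
open Set

noncomputable section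

namespace CompRed

def perp (v : Plane) : Plane := !₂[-v 1, v 0]

lemma inner_eq (x y : Plane) : (inner ℝ x y : ℝ) = x 0 * y 0 + x 1 * y 1 := by
  simp [PiLp.inner_apply, Fin.sum_univ_two, RCLike.inner_apply]; ring

lemma perp_apply0 (v : Plane) : perp v 0 = -v 1 := rfl
lemma perp_apply1 (v : Plane) : perp v 1 = v 0 := rfl

lemma eq_zero_iff (v : Plane) : v = 0 ↔ v 0 = 0 ∧ v 1 = 0 := by
  constructor
  · rintro rfl; exact ⟨rfl, rfl⟩
  · rintro ⟨h0, h1⟩; ext i; fin_cases i <;> assumption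

lemma perp_ne_zero {v : Plane} (hv : v ≠ 0) : perp v ≠ 0 := by
  intro h
  apply hv
  have h0 : -v 1 = (0:ℝ) := congrArg (fun w : Plane => w 0) h
  have h1 : v 0 = (0:ℝ) := congrArg (fun w : Plane => w 1) h
  ext i; fin_cases i
  · exact h1
  · show v 1 = (0:ℝ)
    linarith

lemma line_eq (p v : Plane) (hv : v ≠ 0) :
    {x : Plane | ∃ t : ℝ, x = p + t • v} =
      {x | (inner ℝ x (perp v) : ℝ) = (inner ℝ p (perp v) : ℝ)} := by
  ext x
  simp only [mem_setOf_eq, inner_eq, perp_apply0, perp_apply1]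
  constructor
  · rintro ⟨t, rfl⟩
    simp [PiLp.add_apply, PiLp.smul_apply]
    ring
  · intro hx
    rcases eq_or_ne (v 0) 0 with h0 | h0
    · have h1 : v 1 ≠ 0 := fun h1 => hv ((eq_zero_iff v).2 ⟨h0, h1⟩)
      refine ⟨(x 1 - p 1) / v 1, ?_⟩
      have hx0 : x 0 = p 0 := by
        have hm : x 0 * v 1 = p 0 * v 1 := by
          rw [h0] at hx; linarith
        exact mul_right_cancel₀ h1 hm
      ext i; fin_cases i
      · simp [PiLp.add_apply, PiLp.smul_apply, h0, hx0]
      · simp only [PiLp.add_apply, PiLp.smul_apply, smul_eq_mul, Fin.zero_eta, Fin.mk_one]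
        field_simp
        ring
    · refine ⟨(x 0 - p 0) / v 0, ?_⟩
      ext i; fin_cases i
      · simp only [PiLp.add_apply, PiLp.smul_apply, smul_eq_mul, Fin.zero_eta, Fin.mk_one]
        field_simp
        ring
      · simp only [PiLp.add_apply, PiLp.smul_apply, smul_eq_mul, Fin.zero_eta, Fin.mk_one]
        field_simp
        linear_combination hx

lemma isLine_iff (L : Set Plane) :
    IsLine L ↔ ∃ u : Plane, ‖u‖ = 1 ∧ ∃ c : ℝ, L = {x | (inner ℝ x u : ℝ) = c} := by
  constructor
  · rintro ⟨p, v, hv, rfl⟩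
    have hw : perp v ≠ 0 := perp_ne_zero hv
    have hwn : ‖perp v‖ ≠ 0 := norm_ne_zero_iff.2 hw
    refine ⟨‖perp v‖⁻¹ • perp v, ?_, ‖perp v‖⁻¹ * (inner ℝ p (perp v) : ℝ), ?_⟩
    · rw [norm_smul]; simp [abs_of_nonneg, hwn, inv_mul_cancel₀]
    · rw [line_eq p v hv]
      ext x
      simp only [mem_setOf_eq, real_inner_smul_right]
      constructor
      · intro hx; rw [hx]
      · intro hx
        have := mul_left_cancel₀ (inv_ne_zero hwn) hx
        exact this
  · rintro ⟨u, hu, c, rfl⟩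
    refine ⟨c • u, !₂[u 1, -u 0], ?_, ?_⟩
    · intro h
      rw [eq_zero_iff] at h
      have : u = 0 := (eq_zero_iff u).2 ⟨by simpa using h.2, by simpa using h.1⟩
      rw [this] at hu; simp at hu
    · have hperp : perp !₂[u 1, -u 0] = u := by
        ext i; fin_cases i <;> simp [perp]
      rw [line_eq _ _ ?_, hperp]
      · ext x
        have : (inner ℝ (c • u) u : ℝ) = c := by
          rw [real_inner_smul_left, real_inner_self_eq_norm_sq, hu]; ring
        simp [this]
      · intro h
        rw [eq_zero_iff] at h
        have : u = 0 := (eq_zero_iff u).2 ⟨by simpa using h.2, by simpa using h.1⟩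
        rw [this] at hu; simp at hu

abbrev X := Metric.sphere (0:Plane) 1 × EReal

def lineOf (x : X) : Set Plane := {y | ((inner ℝ y (x.1 : Plane) : ℝ) : EReal) = x.2}

lemma isLine_lineOf (u : Metric.sphere (0:Plane) 1) (c : ℝ) :
    IsLine (lineOf (u, (c : EReal))) := by
  rw [isLine_iff]
  refine ⟨u, ?_, c, ?_⟩
  · simpa using u.2
  · ext x
    simp only [lineOf, mem_setOf_eq, EReal.coe_eq_coe_iff]

lemma exists_param {L : Set Plane} (hL : IsLine L) :
    ∃ u : Metric.sphere (0:Plane) 1, ∃ c : ℝ, lineOf (u, (c : EReal)) = L := by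
  rw [isLine_iff] at hL
  obtain ⟨u, hu, c, rfl⟩ := hL
  refine ⟨⟨u, by simpa using hu⟩, c, ?_⟩
  ext x
  simp only [lineOf, mem_setOf_eq, EReal.coe_eq_coe_iff]

lemma closed_BS {S : Set Plane} (hS : IsCompact S) :
    IsClosed {x : X | (S ∩ lineOf x).Nonempty} := by
  have : {x : X | (S ∩ lineOf x).Nonempty} =
      (fun q : Plane × Metric.sphere (0:Plane) 1 =>
        ((q.2, ((inner ℝ q.1 (q.2 : Plane) : ℝ) : EReal)) : X)) '' (S ×ˢ univ) := by
    ext x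
    simp only [mem_setOf_eq, mem_image, mem_prod, mem_univ, and_true]
    constructor
    · rintro ⟨y, hyS, hy⟩
      exact ⟨⟨y, x.1⟩, hyS, by simp [lineOf] at hy; simp [hy, Prod.ext_iff]⟩
    · rintro ⟨⟨y, u⟩, hyS, rfl⟩
      exact ⟨y, hyS, by simp [lineOf]⟩
  rw [this]
  apply IsCompact.isClosed
  apply IsCompact.image (hS.prod isCompact_univ)
  apply Continuous.prodMk continuous_snd
  exact continuous_coe_real_ereal.comp
    (continuous_fst.inner (continuous_subtype_val.comp continuous_snd))

def fix (x : X) : X := (x.1, ((x.2.toReal : ℝ) : EReal))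

lemma isLine_fix (x : X) : IsLine (lineOf (fix x)) :=
  isLine_lineOf x.1 x.2.toReal

lemma lineOf_subset_fix (x : X) : lineOf x ⊆ lineOf (fix x) := by
  intro y hy
  have hy' : ((inner ℝ y (x.1 : Plane) : ℝ) : EReal) = x.2 := hy
  show ((inner ℝ y (x.1 : Plane) : ℝ) : EReal) = ((x.2.toReal : ℝ) : EReal)
  rw [← hy', EReal.toReal_coe]

end CompRed

open CompRed

/-- compactness reduction. If every finite subfamily of a family of
nonempty compact sets can be pierced by n lines, so can the whole family. -/
theorem compactness_reduction (F : Set (Set Plane))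
    (hF : ∀ S ∈ F, IsCompact S ∧ S.Nonempty) (n : ℕ)
    (h : ∀ G : Finset (Set Plane), ↑G ⊆ F →
      ∃ L : Fin n → Set Plane, (∀ i, IsLine (L i)) ∧ ∀ S ∈ G, ∃ i, (S ∩ L i).Nonempty) :
    ∃ L : Fin n → Set Plane, (∀ i, IsLine (L i)) ∧ ∀ S ∈ F, ∃ i, (S ∩ L i).Nonempty := by
  classical
  have hsph : Nonempty (Metric.sphere (0:Plane) 1) :=
    ((NormedSpace.sphere_nonempty (x := (0:Plane)) (r := 1)).2 (by norm_num)).to_subtype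
  have hXne : Nonempty (Fin n → X) := ⟨fun _ => (Classical.arbitrary _, (0:EReal))⟩
  set Z : F → Set (Fin n → X) := fun S => {p | ∃ i, ((S : Set Plane) ∩ lineOf (p i)).Nonempty}
    with hZ
  have hZc : ∀ S : F, IsClosed (Z S) := by
    intro S
    have : Z S = ⋃ i, (fun p : Fin n → X => p i) ⁻¹' {x : X | ((S:Set Plane) ∩ lineOf x).Nonempty} := by
      ext p; simp [hZ]
    rw [this]
    exact isClosed_iUnion_of_finite fun i =>
      (closed_BS (hF S S.2).1).preimage (continuous_apply i)
  have hne : (⋂ S : F, Z S).Nonempty := by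
    by_contra hemp
    rw [not_nonempty_iff_eq_empty] at hemp
    have h0 : (univ ∩ ⋂ S : F, Z S) = ∅ := by rw [hemp]; simp
    obtain ⟨t, ht⟩ := IsCompact.elim_finite_subfamily_closed isCompact_univ Z hZc h0
    set G : Finset (Set Plane) := t.image Subtype.val with hG
    obtain ⟨L, hL1, hL2⟩ := h G (by
      intro S hS
      simp only [hG, Finset.coe_image, mem_image, Finset.mem_coe] at hS
      obtain ⟨S', _, rfl⟩ := hS
      exact S'.2)
    have hparam : ∀ i, ∃ x : X, lineOf x = L i := by
      intro i
      obtain ⟨u, c, hx⟩ := exists_param (hL1 i)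
      exact ⟨(u, (c : EReal)), hx⟩
    choose q hq using hparam
    have hqmem : q ∈ univ ∩ ⋂ S ∈ t, Z S := by
      refine ⟨mem_univ _, ?_⟩
      simp only [mem_iInter]
      intro S hS
      obtain ⟨i, hi⟩ := hL2 S (by
        simp only [hG, Finset.mem_image]
        exact ⟨S, hS, rfl⟩)
      exact ⟨i, by rwa [hq i]⟩
    rw [ht] at hqmem
    exact hqmem
  obtain ⟨p, hp⟩ := hne
  refine ⟨fun i => lineOf (fix (p i)), fun i => isLine_fix _, ?_⟩
  intro S hS
  have := mem_iInter.1 hp ⟨S, hS⟩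
  obtain ⟨i, y, hy1, hy2⟩ := this
  exact ⟨i, y, hy1, lineOf_subset_fix _ hy2⟩
end
end

section
/- Main theorem (lower bound): For every k ≥ 4, there exists a finite family F of nonempty compact convex sets in the plane containing no C(k) subfamily such that F cannot be pierced by ⌈k/2⌉ − 1 lines. -/
open Set

noncomputable section

namespace CkAux

noncomputable def pt (x : ℝ) : Plane :=
  Real.cos x • EuclideanSpace.single 0 (1:ℝ) + Real.sin x • EuclideanSpace.single 1 (1:ℝ)

lemma inner_pt (a b : ℝ) : (inner ℝ (pt a) (pt b) : ℝ) = Real.cos (a - b) := by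
  rw [Real.cos_sub]
  simp [pt, PiLp.inner_apply, EuclideanSpace.single_apply, Fin.sum_univ_two,
    PiLp.add_apply, PiLp.smul_apply, smul_eq_mul, RCLike.inner_apply, mul_comm]

lemma pt_add_nat_two_pi (x : ℝ) (n : ℕ) : pt (x + n * (2 * Real.pi)) = pt x := by
  unfold pt
  rw [Real.cos_add_nat_mul_two_pi, Real.sin_add_nat_mul_two_pi]

noncomputable def theta (N : ℕ) (j : ℕ) : ℝ := (2 * Real.pi / N) * j

noncomputable def cc (N : ℕ) : ℝ := 1 + Real.cos (2 * Real.pi / N)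

lemma theta_mod (N : ℕ) (hN : N ≠ 0) (n : ℕ) :
    theta N n = theta N (n % N) + (n / N : ℕ) * (2 * Real.pi) := by
  have h := congrArg (fun t : ℕ => (t : ℝ)) (Nat.mod_add_div n N)
  simp only [Nat.cast_add, Nat.cast_mul] at h
  have hN' : (N : ℝ) ≠ 0 := Nat.cast_ne_zero.mpr hN
  unfold theta
  rw [show ((n % N : ℕ) : ℝ) = (n:ℝ) - (N:ℝ) * ((n/N : ℕ) : ℝ) by linarith]
  field_simp
  ring

lemma pt_theta_mod (N : ℕ) (hN : N ≠ 0) (n : ℕ) :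
    pt (theta N (n % N)) = pt (theta N n) := by
  rw [theta_mod N hN n, pt_add_nat_two_pi]

/-- strict cosine comparison on the relevant range -/
lemma cos_bound {α x : ℝ} (hα : 0 < α) (hα2 : 3 * α ≤ 2 * Real.pi)
    (h1 : 3*α/2 ≤ x) (h2 : x ≤ 2*Real.pi - 3*α/2) :
    Real.cos x < Real.cos (α/2) := by
  rcases le_or_gt x Real.pi with hx | hx
  · exact Real.cos_lt_cos_of_nonneg_of_le_pi (by positivity) hx (by linarith)
  · rw [← Real.cos_two_pi_sub]
    exact Real.cos_lt_cos_of_nonneg_of_le_pi (by positivity) (by linarith) (by linarith)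

lemma cos_pair (A B : ℝ) :
    Real.cos A + Real.cos (A + B) = 2 * Real.cos (A + B/2) * Real.cos (B/2) := by
  rw [Real.cos_add_cos,
    show (A + (A + B))/2 = A + B/2 by ring,
    show (A - (A + B))/2 = -(B/2) by ring, Real.cos_neg]

lemma cc_eq (N : ℕ) : cc N = 2 * Real.cos ((2 * Real.pi / N)/2) ^ 2 := by
  have := Real.cos_sq ((2 * Real.pi / N)/2)
  rw [show 2 * ((2 * Real.pi / N)/2) = 2 * Real.pi / N by ring] at this
  unfold cc; linarith

lemma cos_half_alpha_pos {N : ℕ} (hN : 5 ≤ N) : 0 < Real.cos ((2 * Real.pi / N)/2) := by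
  have hNpos : (0:ℝ) < N := by positivity
  apply Real.cos_pos_of_mem_Ioo
  constructor
  · have : (0:ℝ) < 2 * Real.pi / N / 2 := by positivity
    nlinarith [Real.pi_pos]
  · have h5 : (5:ℝ) ≤ N := by exact_mod_cast hN
    rw [div_lt_iff₀ (by norm_num : (0:ℝ) < 2)]
    rw [div_lt_iff₀ hNpos]
    nlinarith [Real.pi_pos]

lemma key_eq {N a b : ℕ} (hN : 5 ≤ N) (ha : a < N) (hb : b < N)
    (h : b = a ∨ b = (a+1) % N) :
    Real.cos (theta N a - theta N b) + Real.cos (theta N (a+1) - theta N b) = cc N := by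
  have hN0 : N ≠ 0 := by omega
  rcases h with rfl | rfl
  · have h1 : theta N b - theta N b = 0 := by ring
    have h2 : theta N (b+1) - theta N b = 2 * Real.pi / N := by
      unfold theta; push_cast; field_simp; ring
    rw [h1, h2, Real.cos_zero]; rfl
  · have hmod := theta_mod N hN0 (a+1)
    have h1 : theta N a - theta N ((a+1) % N)
        = (theta N a - theta N (a+1)) + ((a+1)/N : ℕ) * (2*Real.pi) := by
      rw [hmod]; ring
    have h2 : theta N (a+1) - theta N ((a+1) % N) = ((a+1)/N : ℕ) * (2*Real.pi) := by
      rw [hmod]; ring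
    rw [h1, h2, Real.cos_add_nat_mul_two_pi, Real.cos_nat_mul_two_pi]
    have h3 : theta N a - theta N (a+1) = -(2 * Real.pi / N) := by
      unfold theta; push_cast; field_simp; ring
    rw [h3, Real.cos_neg]
    unfold cc; ring

lemma key_lt {N a b : ℕ} (hN : 5 ≤ N) (ha : a < N) (hb : b < N)
    (h1 : b ≠ a) (h2 : b ≠ (a+1) % N) :
    Real.cos (theta N a - theta N b) + Real.cos (theta N (a+1) - theta N b) < cc N := by
  have hN0 : N ≠ 0 := by omega
  set α := 2 * Real.pi / N with hα
  have hαpos : 0 < α := by rw [hα]; positivity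
  have hαN : α * N = 2 * Real.pi := by
    rw [hα]; field_simp
  have hα2 : 3 * α ≤ 2 * Real.pi := by
    rw [← hαN]
    have : (3:ℝ) ≤ N := by exact_mod_cast (by omega : 3 ≤ N)
    nlinarith
  -- reduce to the cosine bound
  have hA : theta N a - theta N b = α * ((a:ℝ) - (b:ℝ)) := by unfold theta; push_cast; ring
  have hA' : theta N (a+1) - theta N b = α * ((a:ℝ) - (b:ℝ)) + α := by
    unfold theta; push_cast; ring
  rw [hA, hA', cos_pair, cc_eq, ← hα]
  have hcos : 0 < Real.cos (α/2) := by rw [hα]; exact cos_half_alpha_pos hN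
  have hmain : Real.cos (α * ((a:ℝ) - (b:ℝ)) + α/2) < Real.cos (α/2) := by
    -- integer case analysis
    set E : ℤ := (a:ℤ) - (b:ℤ) with hE
    have hcast : ((a:ℝ) - (b:ℝ)) = (E : ℝ) := by rw [hE]; push_cast; ring
    rw [hcast]
    have hrange : -(N:ℤ) + 1 ≤ E ∧ E ≤ (N:ℤ) - 1 := by omega
    have hE0 : E ≠ 0 := by omega
    have hEm1 : E ≠ -1 ∧ E ≠ (N:ℤ) - 1 := by
      rcases Nat.lt_or_ge (a+1) N with hlt | hge
      · rw [Nat.mod_eq_of_lt hlt] at h2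
        constructor <;> omega
      · have haN : a + 1 = N := by omega
        rw [haN, Nat.mod_self] at h2
        constructor <;> omega
    obtain ⟨hEm1, hEN1⟩ := hEm1
    rcases (by omega : (1 ≤ E ∧ E ≤ (N:ℤ) - 2) ∨ (-(N:ℤ)+1 ≤ E ∧ E ≤ -2)) with ⟨hl, hr⟩ | ⟨hl, hr⟩
    · apply cos_bound hαpos hα2
      · have : (1:ℝ) ≤ (E:ℝ) := by exact_mod_cast hl
        nlinarith
      · have : (E:ℝ) ≤ (N:ℝ) - 2 := by exact_mod_cast hr
        nlinarith
    · rw [← Real.cos_neg]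
      apply cos_bound hαpos hα2
      · have : (E:ℝ) ≤ -2 := by exact_mod_cast hr
        nlinarith
      · have : -(N:ℝ) + 1 ≤ (E:ℝ) := by exact_mod_cast hl
        nlinarith
  nlinarith [hcos, hmain]

section Polygon

variable {N : ℕ} [NeZero N]

noncomputable def vv (N : ℕ) [NeZero N] (j : Fin N) : Plane := pt (theta N j.val)

noncomputable def SS (N : ℕ) [NeZero N] (j : Fin N) : Set Plane :=
  segment ℝ (vv N j) (vv N (j+1))

noncomputable def uu (N : ℕ) [NeZero N] (j : Fin N) : Plane :=
  pt (theta N j.val) + pt (theta N (j.val+1))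

noncomputable def ff (N : ℕ) [NeZero N] (j : Fin N) (x : Plane) : ℝ := inner ℝ (uu N j) x

lemma val_add_one (j : Fin N) (hN : 5 ≤ N) : ((j + 1 : Fin N) : ℕ) = (j.val + 1) % N := by
  have h1 : ((1 : Fin N) : ℕ) = 1 % N := Fin.val_one' N
  rw [Fin.val_add, h1, Nat.mod_eq_of_lt (by omega : 1 < N)]

lemma vv_succ (j : Fin N) (hN : 5 ≤ N) : vv N (j + 1) = pt (theta N (j.val + 1)) := by
  unfold vv
  rw [val_add_one j hN, pt_theta_mod N (by omega)]

lemma ff_vertex (j l : Fin N) (hN : 5 ≤ N) :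
    ff N j (vv N l) = Real.cos (theta N j.val - theta N l.val)
      + Real.cos (theta N (j.val + 1) - theta N l.val) := by
  unfold ff uu vv
  rw [inner_add_left, inner_pt, inner_pt]

lemma fin_eq_iff_val (j l : Fin N) (hN : 5 ≤ N) :
    (l = j ∨ l = j + 1) ↔ (l.val = j.val ∨ l.val = (j.val + 1) % N) := by
  rw [Fin.ext_iff, Fin.ext_iff, val_add_one j hN]

lemma ff_vertex_le (j l : Fin N) (hN : 5 ≤ N) : ff N j (vv N l) ≤ cc N := by
  rw [ff_vertex j l hN]
  by_cases h : l.val = j.val ∨ l.val = (j.val + 1) % N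
  · exact le_of_eq (key_eq hN j.isLt l.isLt h)
  · push_neg at h
    exact le_of_lt (key_lt hN j.isLt l.isLt h.1 h.2)

lemma ff_vertex_eq_iff (j l : Fin N) (hN : 5 ≤ N) :
    ff N j (vv N l) = cc N ↔ (l = j ∨ l = j + 1) := by
  rw [ff_vertex j l hN, fin_eq_iff_val j l hN]
  constructor
  · intro he
    by_contra h
    push_neg at h
    exact absurd he (ne_of_lt (key_lt hN j.isLt l.isLt h.1 h.2))
  · exact key_eq hN j.isLt l.isLt

lemma ff_affine (j : Fin N) (x y : Plane) (s t : ℝ) :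
    ff N j (s • x + t • y) = s * ff N j x + t * ff N j y := by
  unfold ff
  rw [inner_add_right, real_inner_smul_right, real_inner_smul_right]

lemma ff_side_le (j j' : Fin N) (hN : 5 ≤ N) {x : Plane} (hx : x ∈ SS N j') :
    ff N j x ≤ cc N := by
  obtain ⟨s, t, hs, ht, hst, rfl⟩ := hx
  rw [ff_affine]
  have h1 := ff_vertex_le j j' hN
  have h2 := ff_vertex_le j (j'+1) hN
  have e1 : s * ff N j (vv N j') ≤ s * cc N := mul_le_mul_of_nonneg_left h1 hs
  have e2 : t * ff N j (vv N (j'+1)) ≤ t * cc N := mul_le_mul_of_nonneg_left h2 ht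
  have e3 : s * cc N + t * cc N = cc N := by rw [← add_mul, hst, one_mul]
  linarith

lemma ff_on_side (j : Fin N) (hN : 5 ≤ N) {x : Plane} (hx : x ∈ SS N j) :
    ff N j x = cc N := by
  obtain ⟨s, t, hs, ht, hst, rfl⟩ := hx
  rw [ff_affine]
  have h1 : ff N j (vv N j) = cc N := (ff_vertex_eq_iff j j hN).2 (Or.inl rfl)
  have h2 : ff N j (vv N (j+1)) = cc N := (ff_vertex_eq_iff j (j+1) hN).2 (Or.inr rfl)
  rw [h1, h2, ← add_mul, hst, one_mul]

lemma side_touch (j j' : Fin N) (hN : 5 ≤ N) {x : Plane} (hx : x ∈ SS N j')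
    (hfx : ff N j x = cc N) : j' = j - 1 ∨ j' = j ∨ j' = j + 1 := by
  obtain ⟨s, t, hs, ht, hst, rfl⟩ := hx
  rw [ff_affine] at hfx
  have h1 := ff_vertex_le j j' hN
  have h2 := ff_vertex_le j (j'+1) hN
  have e3 : s * cc N + t * cc N = cc N := by rw [← add_mul, hst, one_mul]
  have hz : s * (cc N - ff N j (vv N j')) + t * (cc N - ff N j (vv N (j'+1))) = 0 := by
    have hr : s * (cc N - ff N j (vv N j')) + t * (cc N - ff N j (vv N (j'+1)))
        = (s * cc N + t * cc N) - (s * ff N j (vv N j') + t * ff N j (vv N (j'+1))) := by ring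
    rw [hr, e3, hfx]; ring
  have hp1 : 0 ≤ s * (cc N - ff N j (vv N j')) :=
    mul_nonneg hs (by linarith : (0:ℝ) ≤ cc N - ff N j (vv N j'))
  have hp2 : 0 ≤ t * (cc N - ff N j (vv N (j'+1))) :=
    mul_nonneg ht (by linarith : (0:ℝ) ≤ cc N - ff N j (vv N (j'+1)))
  have hz1 : s * (cc N - ff N j (vv N j')) = 0 ∧ t * (cc N - ff N j (vv N (j'+1))) = 0 := by
    constructor <;> linarith
  rcases eq_or_ne s 0 with hs0 | hs0
  · have ht1 : t = 1 := by linarith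
    have : ff N j (vv N (j'+1)) = cc N := by
      rcases mul_eq_zero.1 hz1.2 with h | h
      · exact absurd h (by rw [ht1]; norm_num)
      · linarith
    rcases (ff_vertex_eq_iff j (j'+1) hN).1 this with h | h
    · exact Or.inl (eq_sub_iff_add_eq.2 h)
    · exact Or.inr (Or.inl (add_right_cancel h))
  · have : ff N j (vv N j') = cc N := by
      rcases mul_eq_zero.1 hz1.1 with h | h
      · exact absurd h hs0
      · linarith
    rcases (ff_vertex_eq_iff j j' hN).1 this with h | h
    · right; left; exact h
    · right; right; exact h

end Polygon

section Fin

variable {n : ℕ} [NeZero n]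
open Fin.NatCast

lemma fin_shift_ne (c : ℕ) (hc : 0 < c) (hcn : c < n) (x : Fin n) : x + (c : Fin n) ≠ x := by
  intro h
  have hv := congrArg Fin.val h
  rw [Fin.val_add, Fin.val_natCast, Nat.mod_eq_of_lt hcn] at hv
  have hx := x.isLt
  rcases Nat.lt_or_ge (x.val + c) n with hlt | hge
  · rw [Nat.mod_eq_of_lt hlt] at hv; omega
  · rw [Nat.mod_eq_sub_mod hge, Nat.mod_eq_of_lt (by omega)] at hv; omega

lemma fin_ne_add_one (h : 2 ≤ n) (x : Fin n) : x + 1 ≠ x := by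
  have := fin_shift_ne 1 (by norm_num) (by omega) x
  rwa [Nat.cast_one] at this

lemma fin_ne_add_two (h : 3 ≤ n) (x : Fin n) : x + 2 ≠ x := by
  have := fin_shift_ne 2 (by norm_num) (by omega) x
  rwa [Nat.cast_two] at this

lemma fin_ne_add_three (h : 4 ≤ n) (x : Fin n) : x + 3 ≠ x := by
  have := fin_shift_ne 3 (by norm_num) (by omega) x
  rwa [Nat.cast_ofNat] at this

lemma exists_adjacent (A : Finset (Fin n)) (hA : n < 2 * A.card) :
    ∃ j : Fin n, j ∈ A ∧ j + 1 ∈ A := by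
  by_contra h
  push_neg at h
  have hdisj : Disjoint A (A.image (· + 1)) := by
    rw [Finset.disjoint_right]
    intro b hb hbA
    obtain ⟨a, ha, rfl⟩ := Finset.mem_image.1 hb
    exact h a ha hbA
  have hcard : (A ∪ A.image (· + 1)).card = A.card + A.card := by
    rw [Finset.card_union_of_disjoint hdisj,
      Finset.card_image_of_injective _ (add_left_injective 1)]
  have := Finset.card_le_univ (A ∪ A.image (· + 1))
  rw [hcard] at this
  simp only [Finset.card_univ, Fintype.card_fin] at this
  omega

lemma three_distinct {α : Type*} [DecidableEq α] {s : Finset α} (h : 3 ≤ s.card) :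
    ∃ a ∈ s, ∃ b ∈ s, ∃ c ∈ s, a ≠ b ∧ a ≠ c ∧ b ≠ c := by
  obtain ⟨a, ha⟩ : s.Nonempty := Finset.card_pos.1 (by omega)
  obtain ⟨b, hb, hba⟩ := Finset.exists_mem_ne (s := s) (by omega : 1 < s.card) a
  have h2 : 1 ≤ ((s.erase a).erase b).card := by
    rw [Finset.card_erase_of_mem (Finset.mem_erase.2 ⟨hba, hb⟩), Finset.card_erase_of_mem ha]
    omega
  obtain ⟨c, hc⟩ := Finset.card_pos.1 h2
  obtain ⟨hcb, hca, hcs⟩ : c ≠ b ∧ c ≠ a ∧ c ∈ s := by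
    have h1 := Finset.mem_erase.1 hc
    have h2 := Finset.mem_erase.1 h1.2
    exact ⟨h1.1, h2.1, h2.2⟩
  exact ⟨a, ha, b, hb, c, hcs, hba.symm, hca.symm, hcb.symm⟩

lemma ordered_triple {s : Finset ℝ} (h : 3 ≤ s.card) :
    ∃ a ∈ s, ∃ b ∈ s, ∃ c ∈ s, a < b ∧ b < c := by
  have hne : s.Nonempty := Finset.card_pos.1 (by omega)
  set a := s.min' hne with ha
  set c := s.max' hne with hc
  have hac : a ≠ c := by
    intro h'
    have : ∀ x ∈ s, x = a := fun x hx => le_antisymm (h' ▸ s.le_max' x hx) (s.min'_le x hx)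
    have hs : s ⊆ {a} := fun x hx => Finset.mem_singleton.2 (this x hx)
    have := Finset.card_le_card hs
    simp at this; omega
  have h2 : 1 ≤ ((s.erase a).erase c).card := by
    rw [Finset.card_erase_of_mem (Finset.mem_erase.2 ⟨Ne.symm hac, s.max'_mem hne⟩),
      Finset.card_erase_of_mem (s.min'_mem hne)]
    omega
  obtain ⟨b, hb⟩ := Finset.card_pos.1 h2
  obtain ⟨hbc, hba, hbs⟩ : b ≠ c ∧ b ≠ a ∧ b ∈ s := by
    have h1 := Finset.mem_erase.1 hb
    have h2' := Finset.mem_erase.1 h1.2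
    exact ⟨h1.1, h2'.1, h2'.2⟩
  exact ⟨a, s.min'_mem hne, b, hbs, c, s.max'_mem hne,
    lt_of_le_of_ne (s.min'_le b hbs) (Ne.symm hba), lt_of_le_of_ne (s.le_max' b hbs) hbc⟩

end Fin

section Polygon2

variable {N : ℕ} [NeZero N]

lemma sides_adj (hN : 5 ≤ N) {a b : Fin N} (h : (SS N a ∩ SS N b).Nonempty) :
    a = b - 1 ∨ a = b ∨ a = b + 1 := by
  obtain ⟨x, hxa, hxb⟩ := h
  exact side_touch b a hN hxa (ff_on_side b hN hxb)

lemma not_three (hN : 5 ≤ N) {a b d : Fin N} (hab : a ≠ b) (had : a ≠ d) (hbd : b ≠ d)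
    {x : Plane} (hxa : x ∈ SS N a) (hxb : x ∈ SS N b) (hxd : x ∈ SS N d) : False := by
  have h4 : 4 ≤ N := by omega
  have three_eq : (3 : Fin N) = 1 + 1 + 1 := by open Fin.CommRing in norm_num
  have key : ∀ p q : Fin N, p ≠ q → x ∈ SS N p → x ∈ SS N q →
      p + 1 = q ∨ p = q + 1 := by
    intro p q hpq hp hq
    rcases sides_adj hN ⟨x, hp, hq⟩ with h | h | h
    · exact Or.inl (eq_sub_iff_add_eq.1 h)
    · exact absurd h hpq
    · exact Or.inr h
  rcases key a b hab hxa hxb with h1 | h1 <;>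
    rcases key a d had hxa hxd with h2' | h2' <;>
      rcases key b d hbd hxb hxd with h3' | h3'
  · exact hbd (h1 ▸ h2')
  · exact hbd (h1 ▸ h2')
  · -- a+1=b, a=d+1, b+1=d
    apply fin_ne_add_three h4 a
    have e : a + 1 + 1 + 1 = a := by
      rw [h1, h3', ← h2']
    rw [three_eq, ← add_assoc, ← add_assoc]
    exact e
  · -- a+1=b, a=d+1, b=d+1 : a = b
    exact hab (h2'.trans h3'.symm)
  · -- a=b+1, a+1=d, b+1=d : a+1 = b+1
    exact hab (add_right_cancel (h2'.trans h3'.symm))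
  · -- a=b+1, a+1=d, b=d+1
    apply fin_ne_add_three h4 b
    have e : b + 1 + 1 + 1 = b := by
      rw [← h1, h2', ← h3']
    rw [three_eq, ← add_assoc, ← add_assoc]
    exact e
  · exact hbd (add_right_cancel (h1.symm.trans h2'))
  · exact hbd (add_right_cancel (h1.symm.trans h2'))

end Polygon2

section Main

variable {N : ℕ} [NeZero N]

lemma fin_add_one_add_one (x : Fin N) : x + 1 + 1 = x + 2 := by
  rw [add_assoc]; open Fin.CommRing in norm_num

lemma fin_add_two_add_one (x : Fin N) : x + 2 + 1 = x + 3 := by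
  rw [add_assoc]; open Fin.CommRing in norm_num

lemma line_meets_le_four (hN : 5 ≤ N) (p w : Plane) (T : Finset (Fin N))
    (hTmem : ∀ j ∈ T, (SS N j ∩ {x : Plane | ∃ t : ℝ, x = p + t • w}).Nonempty) :
    T.card ≤ 4 := by
  classical
  by_contra hcon
  push_neg at hcon
  have hex : ∀ j : Fin N, ∃ t : ℝ, j ∈ T → p + t • w ∈ SS N j := by
    intro j
    by_cases hj : j ∈ T
    · obtain ⟨x, hxS, t, rfl⟩ := hTmem j hj
      exact ⟨t, fun _ => hxS⟩
    · exact ⟨0, fun h => absurd h hj⟩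
  choose g hg using hex
  have hfib : ∀ r ∈ T.image g, (T.filter (fun j => g j = r)).card ≤ 2 := by
    intro r _
    by_contra hc
    push_neg at hc
    obtain ⟨a, ha, b, hb, d, hd, hab, had, hbd⟩ :=
      three_distinct (by omega : 3 ≤ (T.filter (fun j => g j = r)).card)
    have hma := Finset.mem_filter.1 ha
    have hmb := Finset.mem_filter.1 hb
    have hmd := Finset.mem_filter.1 hd
    refine not_three hN hab had hbd (x := p + r • w) ?_ ?_ ?_
    · have := hg a hma.1; rwa [hma.2] at this
    · have := hg b hmb.1; rwa [hmb.2] at this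
    · have := hg d hmd.1; rwa [hmd.2] at this
  have hTle : T.card ≤ 2 * (T.image g).card := Finset.card_le_mul_card_image T 2 hfib
  have himg : 3 ≤ (T.image g).card := by omega
  obtain ⟨r1, hr1, r2, hr2, r3, hr3, h12, h23⟩ := ordered_triple himg
  obtain ⟨ja, hja, hga⟩ := Finset.mem_image.1 hr1
  obtain ⟨jb, hjb, hgb⟩ := Finset.mem_image.1 hr2
  obtain ⟨jc, hjc, hgc⟩ := Finset.mem_image.1 hr3
  have haff : ∀ t : ℝ, ff N jb (p + t • w) = ff N jb p + t * (inner ℝ (uu N jb) w : ℝ) := by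
    intro t; unfold ff; rw [inner_add_right, real_inner_smul_right]
  set q : ℝ := (inner ℝ (uu N jb) w : ℝ) with hq
  have hb' : ff N jb p + r2 * q = cc N := by
    have := ff_on_side jb hN (hg jb hjb)
    rwa [haff, hgb] at this
  have ha' : ff N jb p + r1 * q ≤ cc N := by
    have := ff_side_le jb ja hN (hg ja hja)
    rwa [haff, hga] at this
  have hc' : ff N jb p + r3 * q ≤ cc N := by
    have := ff_side_le jb jc hN (hg jc hjc)
    rwa [haff, hgc] at this
  rcases lt_trichotomy q 0 with hq0 | hq0 | hq0
  · nlinarith [mul_pos (by linarith : (0:ℝ) < r2 - r1) (by linarith : (0:ℝ) < -q)]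
  · have hffp : ff N jb p = cc N := by
      rw [hq0] at hb'; linarith
    have hall : ∀ j ∈ T, j = jb - 1 ∨ j = jb ∨ j = jb + 1 := by
      intro j hj
      apply side_touch jb j hN (hg j hj)
      rw [haff, hq0, mul_zero, add_zero, hffp]
    have hsub : T ⊆ {jb - 1, jb, jb + 1} := by
      intro j hj
      rcases hall j hj with h | h | h <;> simp [h]
    have hcard := Finset.card_le_card hsub
    have h3c : ({jb - 1, jb, jb + 1} : Finset (Fin N)).card ≤ 3 := by
      apply (Finset.card_insert_le _ _).trans
      have := Finset.card_insert_le jb ({jb + 1} : Finset (Fin N))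
      simp only [Finset.card_singleton] at this
      omega
    omega
  · nlinarith [mul_pos (by linarith : (0:ℝ) < r3 - r2) hq0]

lemma SS_inj (hN : 5 ≤ N) {a b : Fin N} (h : SS N a = SS N b) : a = b := by
  have h2 : 2 ≤ N := by omega
  have hva : vv N a ∈ SS N b := h ▸ left_mem_segment ℝ _ _
  have hva1 : vv N (a + 1) ∈ SS N b := h ▸ right_mem_segment ℝ _ _
  have e1 : a = b ∨ a = b + 1 :=
    (ff_vertex_eq_iff b a hN).1 (ff_on_side b hN hva)
  have e2 : a + 1 = b ∨ a + 1 = b + 1 :=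
    (ff_vertex_eq_iff b (a+1) hN).1 (ff_on_side b hN hva1)
  rcases e1 with h1 | h1
  · exact h1
  · rcases e2 with h2' | h2'
    · exfalso
      apply fin_ne_add_two (by omega : 3 ≤ N) b
      rw [← fin_add_one_add_one, ← h1, h2']
    · exfalso
      have := add_right_cancel h2'
      rw [this] at h1
      exact fin_ne_add_one h2 b h1.symm

lemma ck_disjoint {k : ℕ} [NeZero k] (hk : 4 ≤ k) {G : Fin k → Set Plane}
    (hCk : IsCk k G) {p q : Fin k} (hpq : p ≠ q) {z : Plane}
    (hzp : z ∈ G p) (hzq : z ∈ G q) : False := by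
  obtain ⟨hinj, hsep⟩ := hCk
  have hk2 : 2 ≤ k := by omega
  have hk3 : 3 ≤ k := by omega
  have hk4 : 4 ≤ k := hk
  have main : ∀ i j : Fin k, Disjoint ({i, i + 1} : Finset (Fin k)) {j, j + 1} →
      z ∈ convexHull ℝ (G i ∪ G (i + 1)) → z ∈ convexHull ℝ (G j ∪ G (j + 1)) → False := by
    intro i j hd hz1 hz2
    have h0 := hsep i j hd
    have : z ∈ convexHull ℝ (G i ∪ G (i+1)) ∩ convexHull ℝ (G j ∪ G (j+1)) := ⟨hz1, hz2⟩
    rw [h0] at this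
    exact this
  have mkdisj : ∀ i j : Fin k, i ≠ j → i ≠ j + 1 → i + 1 ≠ j → i + 1 ≠ j + 1 →
      Disjoint ({i, i + 1} : Finset (Fin k)) {j, j + 1} := by
    intro i j h1 h2' h3' h4'
    simp only [Finset.disjoint_insert_left, Finset.disjoint_singleton_left,
      Finset.mem_insert, Finset.mem_singleton, not_or]
    exact ⟨⟨h1, h2'⟩, ⟨h3', h4'⟩⟩
  have hsub : ∀ x : Fin k, (x - 1) + 1 = x := fun x => sub_add_cancel x 1
  by_cases hq1 : q = p + 1
  · subst hq1
    apply main (p - 1) (p + 1)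
    · apply mkdisj
      · intro h
        have h' := congrArg (· + 1) h
        simp only [hsub, fin_add_one_add_one] at h'
        exact fin_ne_add_two hk3 p h'.symm
      · intro h
        rw [fin_add_one_add_one] at h
        have h' := congrArg (· + 1) h
        simp only [hsub, fin_add_two_add_one] at h'
        exact fin_ne_add_three hk4 p h'.symm
      · rw [hsub]
        exact fun h => fin_ne_add_one hk2 p h.symm
      · rw [hsub, fin_add_one_add_one]
        exact fun h => fin_ne_add_two hk3 p h.symm
    · apply subset_convexHull ℝ _ (Set.mem_union_right _ ?_)
      rw [hsub]
      exact hzp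
    · exact subset_convexHull ℝ _ (Set.mem_union_left _ hzq)
  · by_cases hq2 : p = q + 1
    · subst hq2
      apply main (q + 1) (q - 1)
      · apply mkdisj
        · intro h
          have h' := congrArg (· + 1) h
          simp only [hsub, fin_add_one_add_one] at h'
          exact fin_ne_add_two hk3 q h'
        · rw [hsub]
          exact fun h => fin_ne_add_one hk2 q h
        · intro h
          rw [fin_add_one_add_one] at h
          have h' := congrArg (· + 1) h
          simp only [hsub, fin_add_two_add_one] at h'
          exact fin_ne_add_three hk4 q h'
        · rw [hsub, fin_add_one_add_one]
          exact fun h => fin_ne_add_two hk3 q h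
      · exact subset_convexHull ℝ _ (Set.mem_union_left _ hzp)
      · apply subset_convexHull ℝ _ (Set.mem_union_right _ ?_)
        rw [hsub]
        exact hzq
    · apply main p q
      · apply mkdisj
        · exact hpq
        · exact hq2
        · exact fun h => hq1 h.symm
        · exact fun h => hpq (add_right_cancel h)
      · exact subset_convexHull ℝ _ (Set.mem_union_left _ hzp)
      · exact subset_convexHull ℝ _ (Set.mem_union_left _ hzq)

end Main

/-- The full construction, parameterized by `m ≥ 1`. -/
lemma construction (m : ℕ) (hm : 1 ≤ m) :
    ∃ F : Finset (Set Plane),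
      (∀ S ∈ F, S.Nonempty ∧ IsCompact S ∧ Convex ℝ S) ∧
      (∀ (k : ℕ) [NeZero k], 4 ≤ k → 4 * m + 1 < 2 * k →
        ¬ ∃ G : Fin k → Set Plane, (∀ i, G i ∈ (F : Set (Set Plane))) ∧ IsCk k G) ∧
      (¬ ∃ L : Fin m → Set Plane, (∀ i, IsLine (L i)) ∧
        ∀ S ∈ F, ∃ i, (S ∩ L i).Nonempty) := by
  classical
  set N := 4 * m + 1 with hNdef
  have hN : 5 ≤ N := by omega
  haveI : NeZero N := ⟨by omega⟩
  refine ⟨(Finset.univ : Finset (Fin N)).image (SS N), ?_, ?_, ?_⟩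
  · rintro S hS
    obtain ⟨j, -, rfl⟩ := Finset.mem_image.1 hS
    refine ⟨⟨vv N j, left_mem_segment ℝ _ _⟩, ?_, convex_segment _ _⟩
    show IsCompact (segment ℝ (vv N j) (vv N (j+1)))
    rw [← convexHull_pair]
    exact (Set.toFinite _).isCompact_convexHull ℝ
  · intro k _ hk4 hkN
    rintro ⟨G, hGF, hCk⟩
    have hinj := hCk.1
    have hσ : ∀ a : Fin k, ∃ j : Fin N, SS N j = G a := by
      intro a
      have := hGF a
      rw [Finset.coe_image] at this
      obtain ⟨j, -, hj⟩ := this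
      exact ⟨j, hj⟩
    choose σ hσ using hσ
    have hσinj : Function.Injective σ := by
      intro a b hab
      apply hinj
      rw [← hσ a, ← hσ b, hab]
    have hcard : N < 2 * ((Finset.univ : Finset (Fin k)).image σ).card := by
      rw [Finset.card_image_of_injective _ hσinj, Finset.card_univ, Fintype.card_fin]
      omega
    obtain ⟨j, hj, hj1⟩ := exists_adjacent _ hcard
    obtain ⟨a, -, ha⟩ := Finset.mem_image.1 hj
    obtain ⟨b, -, hb⟩ := Finset.mem_image.1 hj1
    have hab : a ≠ b := by
      intro h
      rw [h, hb] at ha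
      exact fin_ne_add_one (by omega : 2 ≤ N) j ha
    have hz1 : vv N (j + 1) ∈ G a := by
      rw [← hσ a, ha]
      exact right_mem_segment ℝ _ _
    have hz2 : vv N (j + 1) ∈ G b := by
      rw [← hσ b, hb]
      exact left_mem_segment ℝ _ _
    exact ck_disjoint hk4 hCk hab hz1 hz2
  · rintro ⟨L, hLine, hP⟩
    have hAcard : ∀ i : Fin m,
        ((Finset.univ : Finset (Fin N)).filter
          (fun j => (SS N j ∩ L i).Nonempty)).card ≤ 4 := by
      intro i
      obtain ⟨pi, wi, -, hLi⟩ := hLine i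
      apply line_meets_le_four hN pi wi
      intro j hj
      rw [← hLi]
      exact (Finset.mem_filter.1 hj).2
    have hcover : (Finset.univ : Finset (Fin N)) ⊆
        Finset.univ.biUnion (fun i : Fin m =>
          (Finset.univ : Finset (Fin N)).filter (fun j => (SS N j ∩ L i).Nonempty)) := by
      intro j _
      obtain ⟨i, hi⟩ := hP (SS N j) (Finset.mem_image_of_mem _ (Finset.mem_univ j))
      exact Finset.mem_biUnion.2 ⟨i, Finset.mem_univ i,
        Finset.mem_filter.2 ⟨Finset.mem_univ j, hi⟩⟩
    have h1 := (Finset.card_le_card hcover).trans Finset.card_biUnion_le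
    have h2 : ∑ i : Fin m, ((Finset.univ : Finset (Fin N)).filter
        (fun j => (SS N j ∩ L i).Nonempty)).card ≤ ∑ _i : Fin m, 4 :=
      Finset.sum_le_sum (fun i _ => hAcard i)
    simp only [Finset.sum_const, Finset.card_univ, Fintype.card_fin, smul_eq_mul] at h2
    rw [Finset.card_univ, Fintype.card_fin] at h1
    omega

end CkAux


/-- main theorem, lower bound: for every k ≥ 4 there is a finite C(k)-free
family of nonempty compact convex sets that cannot be pierced by ⌈k/2⌉ − 1 lines. -/
theorem ck_free_lower_bound (k : ℕ) (hk : 4 ≤ k) [NeZero k] :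
    ∃ F : Finset (Set Plane),
      (∀ S ∈ F, S.Nonempty ∧ IsCompact S ∧ Convex ℝ S) ∧
      (¬ ∃ G : Fin k → Set Plane, (∀ i, G i ∈ (F : Set (Set Plane))) ∧ IsCk k G) ∧
      ¬ ∃ L : Fin ((k + 1) / 2 - 1) → Set Plane, (∀ i, IsLine (L i)) ∧
        ∀ S ∈ F, ∃ i, (S ∩ L i).Nonempty := by
  obtain ⟨F, hF1, hF2, hF3⟩ := CkAux.construction ((k + 1) / 2 - 1) (by omega)
  exact ⟨F, hF1, hF2 k hk (by omega), hF3⟩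
end
end

section
/- If F is a family of compact convex sets in the plane and there exist two non-parallel lines such that each of the four open quadrants they determine contains a member of F, then those four members form a C(4). -/
open Set

noncomputable section

/-!
The line `g2 = c2` puts `F1 ∪ F2` and `F3 ∪ F4` in opposite open half-planes, and the line
`g1 = c1` does the same for `F2 ∪ F3` and `F4 ∪ F1`. Open half-planes are convex, so they also
contain the convex hulls, which are therefore disjoint; and nonempty sets lying in opposite
half-planes of one of the lines are distinct.
-/

section Separation

variable {E : Type*} [AddCommGroup E] [Module ℝ E] (f : E →ₗ[ℝ] ℝ) {c : ℝ} {A B : Set E}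

theorem convexHull_inter_convexHull_eq_empty_of_subset_halfSpaces
    (hA : A ⊆ {x | c < f x}) (hB : B ⊆ {x | f x < c}) :
    convexHull ℝ A ∩ convexHull ℝ B = ∅ := by
  have hA' := convexHull_min hA (convex_halfSpace_gt f.isLinear c)
  have hB' := convexHull_min hB (convex_halfSpace_lt f.isLinear c)
  exact eq_empty_of_forall_notMem fun x ⟨hxA, hxB⟩ =>
    lt_asymm (a := c) (b := f x) (hA' hxA) (hB' hxB)

theorem ne_of_subset_halfSpaces (hne : A.Nonempty)
    (hA : A ⊆ {x | c < f x}) (hB : B ⊆ {x | f x < c}) : A ≠ B := by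
  rintro rfl
  obtain ⟨x, hx⟩ := hne
  exact lt_asymm (a := c) (b := f x) (hA hx) (hB hx)

end Separation

theorem isCk_four_of_injective {F : Fin 4 → Set Plane} (hF : Function.Injective F)
    (h02 : convexHull ℝ (F 0 ∪ F 1) ∩ convexHull ℝ (F 2 ∪ F 3) = ∅)
    (h13 : convexHull ℝ (F 1 ∪ F 2) ∩ convexHull ℝ (F 3 ∪ F 0) = ∅) : IsCk 4 F := by
  refine ⟨hF, fun i j hij => ?_⟩
  fin_cases i <;> fin_cases j
  all_goals first
    | exact absurd hij (by decide)
    | exact h02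
    | exact h13
    | exact (inter_comm _ _).trans h02
    | exact (inter_comm _ _).trans h13

theorem injective_vecFour {α : Type*} {a b c d : α}
    (hab : a ≠ b) (hac : a ≠ c) (had : a ≠ d) (hbc : b ≠ c) (hbd : b ≠ d)
    (hcd : c ≠ d) :
    Function.Injective ![a, b, c, d] := by
  rw [← List.nodup_ofFn]
  simp [*]

theorem quadrants_give_c4_general (g1 g2 : Plane →ₗ[ℝ] ℝ)
    (c1 c2 : ℝ)
    (F1 F2 F3 F4 : Set Plane)
    (hne : F1.Nonempty ∧ F2.Nonempty ∧ F3.Nonempty ∧ F4.Nonempty)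
    (h1 : ∀ x ∈ F1, c1 < g1 x ∧ c2 < g2 x)
    (h2 : ∀ x ∈ F2, g1 x < c1 ∧ c2 < g2 x)
    (h3 : ∀ x ∈ F3, g1 x < c1 ∧ g2 x < c2)
    (h4 : ∀ x ∈ F4, c1 < g1 x ∧ g2 x < c2) :
    IsCk 4 ![F1, F2, F3, F4] := by
  obtain ⟨hne1, hne2, -, hne4⟩ := hne
  refine isCk_four_of_injective (injective_vecFour ?_ ?_ ?_ ?_ ?_ ?_) ?_ ?_
  · exact ne_of_subset_halfSpaces g1 hne1 (fun x hx => (h1 x hx).1) (fun x hx => (h2 x hx).1)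
  · exact ne_of_subset_halfSpaces g1 hne1 (fun x hx => (h1 x hx).1) (fun x hx => (h3 x hx).1)
  · exact ne_of_subset_halfSpaces g2 hne1 (fun x hx => (h1 x hx).2) (fun x hx => (h4 x hx).2)
  · exact ne_of_subset_halfSpaces g2 hne2 (fun x hx => (h2 x hx).2) (fun x hx => (h3 x hx).2)
  · exact (ne_of_subset_halfSpaces g1 hne4
      (fun x hx => (h4 x hx).1) (fun x hx => (h2 x hx).1)).symm
  · exact (ne_of_subset_halfSpaces g1 hne4
      (fun x hx => (h4 x hx).1) (fun x hx => (h3 x hx).1)).symm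
  · exact convexHull_inter_convexHull_eq_empty_of_subset_halfSpaces g2
      (union_subset (fun x hx => (h1 x hx).2) (fun x hx => (h2 x hx).2))
      (union_subset (fun x hx => (h3 x hx).2) (fun x hx => (h4 x hx).2))
  · rw [inter_comm]
    exact convexHull_inter_convexHull_eq_empty_of_subset_halfSpaces g1
      (union_subset (fun x hx => (h4 x hx).1) (fun x hx => (h1 x hx).1))
      (union_subset (fun x hx => (h2 x hx).1) (fun x hx => (h3 x hx).1))

/-- if each open quadrant of two non-parallel lines contains a compact
convex member of the family, those four members form a C(4). -/
theorem quadrants_give_c4 (g1 g2 : Plane →ₗ[ℝ] ℝ)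
    (hindep : LinearIndependent ℝ ![g1, g2]) (c1 c2 : ℝ)
    (F1 F2 F3 F4 : Set Plane)
    (hne : F1.Nonempty ∧ F2.Nonempty ∧ F3.Nonempty ∧ F4.Nonempty)
    (hcc : ∀ S ∈ ({F1, F2, F3, F4} : Set (Set Plane)), IsCompact S ∧ Convex ℝ S)
    (h1 : ∀ x ∈ F1, c1 < g1 x ∧ c2 < g2 x)
    (h2 : ∀ x ∈ F2, g1 x < c1 ∧ c2 < g2 x)
    (h3 : ∀ x ∈ F3, g1 x < c1 ∧ g2 x < c2)
    (h4 : ∀ x ∈ F4, c1 < g1 x ∧ g2 x < c2) :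
    IsCk 4 ![F1, F2, F3, F4] :=
  quadrants_give_c4_general g1 g2 c1 c2 F1 F2 F3 F4 hne h1 h2 h3 h4
end
end
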